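/- arXiv:1209.4316 — 7 statements merged into one kernel-verified Lean document; each statement's English description precedes it below -/
import Mathlib

section
/- Let A ∈ ℝ^{m×n} and b ∈ ℝ^m have nonnegative entries only, and assume that no column of A is identically zero. Set R_b = supp(b) ⊆ [m], C_b = N(R_b) \ N(R_b^c) ⊆ [n]. Then {x ∈ ℝ^n : A x = b, x ≥ 0} = {x ∈ ℝ^n : x_j = 0 for all j ∉ C_b, A_{R_b C_b} x_{C_b} = b_{R_b}, and x_{C_b} ≥ 0}; that is, the solution set of the full nonnegative system equals the set of vectors vanishing outside C_b whose restriction to C_b solves the reduced nonnegative system A_{R_b C_b} x = b_{R_b}. -/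
open scoped Classical

/-- For a nonnegative system A x = b (no zero columns of A), the
nonnegative solution set of the full system equals the set of vectors that vanish
outside C_b and whose restriction to C_b solves the reduced nonnegative system. -/
theorem stmt_1 {m n : ℕ} (A : Matrix (Fin m) (Fin n) ℝ) (b : Fin m → ℝ)
    (hA : ∀ i j, 0 ≤ A i j) (hb : ∀ i, 0 ≤ b i)
    (hcol : ∀ j, ∃ i, A i j ≠ 0)
    (Rb : Set (Fin m)) (hRb : Rb = {i | b i ≠ 0})
    (Cb : Set (Fin n))
    (hCb : Cb = {j | (∃ i ∈ Rb, 0 < A i j) ∧ ¬ ∃ i ∈ Rbᶜ, 0 < A i j}) :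
    {x : Fin n → ℝ | A.mulVec x = b ∧ ∀ j, 0 ≤ x j} =
      {x : Fin n → ℝ | (∀ j ∉ Cb, x j = 0) ∧
        (∀ i ∈ Rb, ∑ j ∈ Finset.univ.filter (· ∈ Cb), A i j * x j = b i) ∧
        (∀ j ∈ Cb, 0 ≤ x j)} := by
  ext x
  simp only [Set.mem_setOf_eq]
  constructor
  · rintro ⟨hAx, hx⟩
    -- For rows i ∉ Rb, each term A i j * x j = 0.
    have hterm : ∀ i ∉ Rb, ∀ j, A i j * x j = 0 := by
      intro i hi j
      have hbi : b i = 0 := by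
        by_contra h
        exact hi (hRb ▸ h)
      have hsum : ∑ j, A i j * x j = 0 := by
        have := congrFun hAx i
        simpa [Matrix.mulVec, dotProduct, hbi] using this
      have hnn : ∀ j ∈ Finset.univ, 0 ≤ A i j * x j := fun j _ =>
        mul_nonneg (hA i j) (hx j)
      exact (Finset.sum_eq_zero_iff_of_nonneg hnn).mp hsum j (Finset.mem_univ j)
    have hzero : ∀ j ∉ Cb, x j = 0 := by
      intro j hj
      rw [hCb] at hj
      simp only [Set.mem_setOf_eq, not_and_or, not_not] at hj
      rcases hj with hj | ⟨i, hi, hij⟩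
      · push_neg at hj
        obtain ⟨i, hi⟩ := hcol j
        have hpos : 0 < A i j := lt_of_le_of_ne (hA i j) (Ne.symm hi)
        have hiRb : i ∉ Rb := fun h => absurd hpos (not_lt.mpr (hj i h))
        have := hterm i hiRb j
        rcases mul_eq_zero.mp this with h | h
        · exact absurd h (ne_of_gt hpos)
        · exact h
      · have := hterm i hi j
        rcases mul_eq_zero.mp this with h | h
        · exact absurd h (ne_of_gt hij)
        · exact h
    refine ⟨hzero, ?_, fun j _ => hx j⟩
    intro i hi
    have := congrFun hAx i
    rw [← this]
    simp only [Matrix.mulVec, dotProduct]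
    rw [← Finset.sum_filter_add_sum_filter_not Finset.univ (· ∈ Cb) (fun j => A i j * x j)]
    have : ∑ j ∈ Finset.univ.filter (fun j => ¬ j ∈ Cb), A i j * x j = 0 := by
      apply Finset.sum_eq_zero
      intro j hj
      rw [Finset.mem_filter] at hj
      rw [hzero j hj.2, mul_zero]
    rw [this, add_zero]
  · rintro ⟨hz, heq, hnn⟩
    have hxnn : ∀ j, 0 ≤ x j := by
      intro j
      by_cases h : j ∈ Cb
      · exact hnn j h
      · rw [hz j h]
    refine ⟨?_, hxnn⟩
    funext i
    simp only [Matrix.mulVec, dotProduct]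
    rw [← Finset.sum_filter_add_sum_filter_not Finset.univ (· ∈ Cb) (fun j => A i j * x j)]
    have hout : ∑ j ∈ Finset.univ.filter (fun j => ¬ j ∈ Cb), A i j * x j = 0 := by
      apply Finset.sum_eq_zero
      intro j hj
      rw [Finset.mem_filter] at hj
      rw [hz j hj.2, mul_zero]
    rw [hout, add_zero]
    by_cases hi : i ∈ Rb
    · exact heq i hi
    · have hbi : b i = 0 := by
        rw [hRb] at hi; simpa using hi
      rw [hbi]
      apply Finset.sum_eq_zero
      intro j hj
      rw [Finset.mem_filter] at hj
      have hjc := hj.2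
      rw [hCb] at hjc
      have : ¬ 0 < A i j := fun hpos => hjc.2 ⟨i, hi, hpos⟩
      have : A i j = 0 := le_antisymm (not_lt.mp this) (hA i j)
      rw [this, zero_mul]
end

section
/- Assume every cell of C is incident with exactly 3 rays of R, and let q̄ = max_{r∈R} q_r. Then for every integer k ≥ 1 the expected number of zero measurements satisfies the upper bound N_R^0 = Σ_{r∈R} p_r^k ≤ |R| − 3k + (3/2) k (k−1) q̄. -/
lemma poly_bound_stmt6 (q : ℝ) (h0 : 0 ≤ q) (h1 : q ≤ 1) (k : ℕ) :
    (1 - q) ^ k ≤ 1 - k * q + (k : ℝ) * ((k : ℝ) - 1) / 2 * q ^ 2 := by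
  induction k with
  | zero => simp
  | succ n ih =>
    have h : (0:ℝ) ≤ 1 - q := by linarith
    have h2 := mul_le_mul_of_nonneg_right ih h
    have hn : (0:ℝ) ≤ (n:ℝ) * ((n:ℝ) - 1) := by
      rcases Nat.eq_zero_or_pos n with h'|h'
      · simp [h']
      · have : (1:ℝ) ≤ (n:ℝ) := by exact_mod_cast h'
        nlinarith
    rw [pow_succ]
    push_cast
    nlinarith [h2, mul_nonneg hn (mul_nonneg (mul_nonneg h0 h0) h0)]

/-- If every cell is incident with exactly 3 rays and
q̄ = max_{r∈R} q_r, then for every k ≥ 1,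
N_R^0 = Σ_{r∈R} p_r^k ≤ |R| − 3k + (3/2) k (k−1) q̄. -/
theorem stmt_6 {C ι : Type*} [Fintype C] [Nonempty C] [DecidableEq C]
    [Fintype ι] [Nonempty ι]
    (ray : ι → Finset C)   -- the family R of rays (subsets of cells)
    (hdeg : ∀ c : C, (Finset.univ.filter fun r : ι => c ∈ ray r).card = 3)
    (qbar : ℝ)
    (hqbar : qbar = Finset.univ.sup' Finset.univ_nonempty
      (fun r : ι => ((ray r).card : ℝ) / (Fintype.card C : ℝ)))
    (k : ℕ) (hk : 1 ≤ k) :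
    ∑ r : ι, (1 - ((ray r).card : ℝ) / (Fintype.card C : ℝ)) ^ k
      ≤ (Fintype.card ι : ℝ) - 3 * k + 3 / 2 * k * ((k : ℝ) - 1) * qbar := by
  set q : ι → ℝ := fun r => ((ray r).card : ℝ) / (Fintype.card C : ℝ) with hq
  have hCpos : (0:ℝ) < (Fintype.card C : ℝ) := by exact_mod_cast Fintype.card_pos
  have hq0 : ∀ r, 0 ≤ q r := fun r => div_nonneg (Nat.cast_nonneg _) hCpos.le
  have hq1 : ∀ r, q r ≤ 1 := by
    intro r
    rw [hq, div_le_one hCpos]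
    exact_mod_cast Finset.card_le_univ _
  have hqle : ∀ r, q r ≤ qbar := by
    intro r
    rw [hqbar]
    exact Finset.le_sup' _ (Finset.mem_univ r)
  -- double counting
  have hsumN : ∑ r : ι, (ray r).card = 3 * Fintype.card C := by
    calc ∑ r : ι, (ray r).card
        = ∑ r : ι, ∑ c : C, (if c ∈ ray r then 1 else 0) := by
          refine Finset.sum_congr rfl fun r _ => ?_
          rw [← Finset.card_filter]
          congr 1
          exact (Finset.filter_univ_mem _).symm
      _ = ∑ c : C, ∑ r : ι, (if c ∈ ray r then 1 else 0) := Finset.sum_comm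
      _ = ∑ c : C, 3 := by
          refine Finset.sum_congr rfl fun c _ => ?_
          rw [← hdeg c, Finset.card_filter]
      _ = 3 * Fintype.card C := by
          simp [Finset.sum_const, mul_comm]
  have hsumq : ∑ r : ι, q r = 3 := by
    simp only [hq]
    rw [← Finset.sum_div]
    have : ∑ r : ι, ((ray r).card : ℝ) = 3 * (Fintype.card C : ℝ) := by
      exact_mod_cast congrArg (Nat.cast : ℕ → ℝ) hsumN
    rw [this, mul_div_assoc, div_self hCpos.ne', mul_one]
  set B : ℝ := (k : ℝ) * ((k : ℝ) - 1) / 2 with hB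
  have hk1 : (1:ℝ) ≤ (k:ℝ) := by exact_mod_cast hk
  have hB0 : 0 ≤ B := by
    nlinarith
  calc ∑ r : ι, (1 - q r) ^ k
      ≤ ∑ r : ι, (1 - k * q r + B * q r ^ 2) :=
        Finset.sum_le_sum fun r _ => poly_bound_stmt6 (q r) (hq0 r) (hq1 r) k
    _ ≤ ∑ r : ι, (1 - k * q r + (B * qbar) * q r) := by
        refine Finset.sum_le_sum fun r _ => ?_
        have : q r ^ 2 ≤ qbar * q r := by
          rw [sq]
          exact mul_le_mul_of_nonneg_right (hqle r) (hq0 r)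
        nlinarith
    _ = (Fintype.card ι : ℝ) - (k : ℝ) * 3 + (B * qbar) * 3 := by
        rw [Finset.sum_add_distrib, Finset.sum_sub_distrib, ← Finset.mul_sum,
          ← Finset.mul_sum, hsumq]
        simp
    _ ≤ (Fintype.card ι : ℝ) - 3 * k + 3 / 2 * k * ((k : ℝ) - 1) * qbar := by
        exact le_of_eq (by rw [hB]; ring)
end

section
/- Let R = R₁ ∪ R₂ ∪ R₃ be a disjoint union of three families of rays such that for each i ∈ {1,2,3} the rays of R_i partition C, let r_i(c) denote the unique ray of R_i containing cell c, and assume that for all i ≠ j and all c ∈ C the rays r_i(c) and r_j(c) intersect exactly in the single cell c. Then for a random seeding with sparsity parameter k, the expected number N_C^0 of cells c such that at least one of the three rays r₁(c), r₂(c), r₃(c) is a zero measurement equals N_C^0 = Σ_{i=1}^{3} Σ_{r∈R_i} |r| (1 − |r|/|C|)^k − Σ_{1≤i<j≤3} Σ_{c∈C} (1 − (|r_i(c)| + |r_j(c)| − 1)/|C|)^k + Σ_{c∈C} (1 − (|r₁(c)| + |r₂(c)| + |r₃(c)| − 2)/|C|)^k. -/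
lemma count_avoid {C : Type*} [Fintype C] [DecidableEq C] (k : ℕ) (S : Finset C) :
    (Finset.univ.filter fun f : Fin k → C => ∀ t, f t ∉ S).card
      = (Fintype.card C - S.card) ^ k := by
  have h : (Finset.univ.filter fun f : Fin k → C => ∀ t, f t ∉ S)
      = Fintype.piFinset (fun _ : Fin k => Sᶜ) := by
    ext f; simp [Fintype.mem_piFinset]
  rw [h, Fintype.card_piFinset]
  simp [Finset.card_compl]

lemma sum_fiber {C : Type*} [Fintype C] [DecidableEq C]
    (R : Finset (Finset C)) (rc : C → Finset C)
    (hmem : ∀ c, rc c ∈ R ∧ c ∈ rc c)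
    (huniq : ∀ s ∈ R, ∀ c ∈ s, s = rc c)
    (g : Finset C → ℝ) :
    ∑ c : C, g (rc c) = ∑ s ∈ R, (s.card : ℝ) * g s := by
  rw [← Finset.sum_fiberwise_of_maps_to (g := rc) (fun c _ => (hmem c).1)
      (fun c => g (rc c))]
  refine Finset.sum_congr rfl fun s hs => ?_
  have hfib : Finset.univ.filter (fun c => rc c = s) = s := by
    ext c
    simp only [Finset.mem_filter, Finset.mem_univ, true_and]
    constructor
    · rintro rfl; exact (hmem c).2
    · intro hc; exact (huniq s hs c hc).symm
  calc ∑ c ∈ Finset.univ.filter (fun c => rc c = s), g (rc c)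
      = ∑ _c ∈ Finset.univ.filter (fun c => rc c = s), g s := by
        refine Finset.sum_congr rfl fun c hc => ?_
        rw [(Finset.mem_filter.mp hc).2]
    _ = (s.card : ℝ) * g s := by rw [hfib, Finset.sum_const, nsmul_eq_mul]

lemma card_union3 {α : Type*} [DecidableEq α] (A B D : Finset α) :
    ((A ∪ B ∪ D).card : ℝ) = A.card + B.card + D.card
      - (A ∩ B).card - (A ∩ D).card - (B ∩ D).card + ((A ∩ B) ∩ D).card := by
  have h1 : ((A ∪ B).card : ℝ) + (A ∩ B).card = A.card + B.card := by
    exact_mod_cast Finset.card_union_add_card_inter A B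
  have h2 : ((A ∪ B ∪ D).card : ℝ) + ((A ∪ B) ∩ D).card = (A ∪ B).card + D.card := by
    exact_mod_cast Finset.card_union_add_card_inter (A ∪ B) D
  have e1 : (A ∪ B) ∩ D = (A ∩ D) ∪ (B ∩ D) := Finset.union_inter_distrib_right A B D
  have e2 : (A ∩ D) ∩ (B ∩ D) = (A ∩ B) ∩ D := by ext x; simp
  have h3 : (((A ∩ D) ∪ (B ∩ D)).card : ℝ) + ((A ∩ B) ∩ D).card
      = (A ∩ D).card + (B ∩ D).card := by
    rw [← e2]; exact_mod_cast Finset.card_union_add_card_inter (A ∩ D) (B ∩ D)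
  rw [e1] at h2
  linarith

/-- For three mutually disjoint families of rays R₁, R₂, R₃, each
partitioning C, with r_i(c) the unique ray of R_i through c and
r_i(c) ∩ r_j(c) = {c} for i ≠ j, the expected number of cells having at least
one zero-measurement ray among r₁(c), r₂(c), r₃(c) is given by the
inclusion–exclusion formula. -/
theorem stmt_7 {C : Type*} [Fintype C] [Nonempty C] [DecidableEq C]
    (Ri : Fin 3 → Finset (Finset C))   -- the three families of rays
    (rc : Fin 3 → C → Finset C)        -- r_i(c): the ray of R_i through c
    (hne : ∀ i : Fin 3, ∀ s ∈ Ri i, s.Nonempty)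
    (hmem : ∀ (i : Fin 3) (c : C), rc i c ∈ Ri i ∧ c ∈ rc i c)
    (huniq : ∀ i : Fin 3, ∀ s ∈ Ri i, ∀ c ∈ s, s = rc i c)   -- R_i partitions C
    (hdisj : ∀ i j : Fin 3, i ≠ j → Disjoint (Ri i) (Ri j))  -- disjoint union
    (hinter : ∀ i j : Fin 3, i ≠ j → ∀ c : C, rc i c ∩ rc j c = {c})
    (k : ℕ) :
    (∑ f : Fin k → C,
        ((Finset.univ.filter fun c : C =>
          ∃ i : Fin 3, ∀ t : Fin k, f t ∉ rc i c).card : ℝ))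
      / (Fintype.card C : ℝ) ^ k
    = (∑ i : Fin 3, ∑ s ∈ Ri i,
          (s.card : ℝ) * (1 - (s.card : ℝ) / (Fintype.card C : ℝ)) ^ k)
      - (∑ p ∈ Finset.univ.filter (fun p : Fin 3 × Fin 3 => p.1 < p.2),
          ∑ c : C, (1 - (((rc p.1 c).card : ℝ) + ((rc p.2 c).card : ℝ) - 1)
              / (Fintype.card C : ℝ)) ^ k)
      + ∑ c : C, (1 - (((rc 0 c).card : ℝ) + ((rc 1 c).card : ℝ)
            + ((rc 2 c).card : ℝ) - 2) / (Fintype.card C : ℝ)) ^ k := by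
  classical
  set n : ℝ := (Fintype.card C : ℝ) with hn
  have hn0 : (0:ℝ) < n := by
    rw [hn]; exact_mod_cast Fintype.card_pos
  have hnk : (0:ℝ) < n ^ k := pow_pos hn0 k
  have hA : ∀ S : Finset C,
      ((Finset.univ.filter fun f : Fin k → C => ∀ t, f t ∉ S).card : ℝ)
        = (n - (S.card : ℝ)) ^ k := by
    intro S
    rw [count_avoid]
    have hle : S.card ≤ Fintype.card C := by
      simpa using Finset.card_le_card (Finset.subset_univ S)
    rw [Nat.cast_pow, Nat.cast_sub hle, hn]
  -- per-cell inclusion–exclusion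
  have hcell : ∀ c : C,
      ((Finset.univ.filter fun f : Fin k → C =>
          ∃ i : Fin 3, ∀ t : Fin k, f t ∉ rc i c).card : ℝ)
      = (n - ((rc 0 c).card : ℝ))^k + (n - ((rc 1 c).card : ℝ))^k
          + (n - ((rc 2 c).card : ℝ))^k
        - (n - (((rc 0 c).card : ℝ) + ((rc 1 c).card : ℝ) - 1))^k
        - (n - (((rc 0 c).card : ℝ) + ((rc 2 c).card : ℝ) - 1))^k
        - (n - (((rc 1 c).card : ℝ) + ((rc 2 c).card : ℝ) - 1))^k
        + (n - (((rc 0 c).card : ℝ) + ((rc 1 c).card : ℝ)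
            + ((rc 2 c).card : ℝ) - 2))^k := by
    intro c
    set A : Fin 3 → Finset (Fin k → C) :=
      fun i => Finset.univ.filter fun f : Fin k → C => ∀ t, f t ∉ rc i c with hAdef
    have hpairC : ∀ i j : Fin 3, i ≠ j →
        (((rc i c ∪ rc j c).card : ℕ) : ℝ)
          = ((rc i c).card : ℝ) + ((rc j c).card : ℝ) - 1 := by
      intro i j hij
      have h := Finset.card_union_add_card_inter (rc i c) (rc j c)
      rw [hinter i j hij c, Finset.card_singleton] at h
      have h' : (((rc i c ∪ rc j c).card : ℕ) : ℝ) + 1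
          = ((rc i c).card : ℝ) + ((rc j c).card : ℝ) := by exact_mod_cast h
      linarith
    have htripC : (((rc 0 c ∪ rc 1 c ∪ rc 2 c).card : ℕ) : ℝ)
        = ((rc 0 c).card : ℝ) + ((rc 1 c).card : ℝ) + ((rc 2 c).card : ℝ) - 2 := by
      have h2 := Finset.card_union_add_card_inter (rc 0 c ∪ rc 1 c) (rc 2 c)
      have e : (rc 0 c ∪ rc 1 c) ∩ rc 2 c = {c} := by
        rw [Finset.union_inter_distrib_right, hinter 0 2 (by decide) c,
          hinter 1 2 (by decide) c, Finset.union_self]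
      rw [e, Finset.card_singleton] at h2
      have hp := hpairC 0 1 (by decide)
      have h2' : (((rc 0 c ∪ rc 1 c ∪ rc 2 c).card : ℕ) : ℝ) + 1
          = (((rc 0 c ∪ rc 1 c).card : ℕ) : ℝ) + ((rc 2 c).card : ℝ) := by
        exact_mod_cast h2
      linarith
    have hAB : ∀ i j : Fin 3, A i ∩ A j
        = Finset.univ.filter fun f : Fin k → C => ∀ t, f t ∉ rc i c ∪ rc j c := by
      intro i j
      ext f
      simp [hAdef, Finset.mem_union, not_or, forall_and]
    have hABC : (A 0 ∩ A 1) ∩ A 2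
        = Finset.univ.filter fun f : Fin k → C =>
            ∀ t, f t ∉ rc 0 c ∪ rc 1 c ∪ rc 2 c := by
      ext f
      simp [hAdef, Finset.mem_union, not_or, forall_and, and_assoc]
    have hU : (Finset.univ.filter fun f : Fin k → C =>
          ∃ i : Fin 3, ∀ t : Fin k, f t ∉ rc i c) = A 0 ∪ A 1 ∪ A 2 := by
      ext f
      simp only [hAdef, Finset.mem_union, Finset.mem_filter, Finset.mem_univ, true_and]
      constructor
      · rintro ⟨i, hi⟩; fin_cases i <;> tauto
      · rintro ((h | h) | h)
        exacts [⟨0, h⟩, ⟨1, h⟩, ⟨2, h⟩]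
    rw [hU, card_union3, hABC, hAB 0 1, hAB 0 2, hAB 1 2]
    simp only [hAdef]
    rw [hA, hA, hA, hA, hA, hA, hA,
      hpairC 0 1 (by decide), hpairC 0 2 (by decide), hpairC 1 2 (by decide), htripC]
  -- swap the sums
  have hswap :
      (∑ f : Fin k → C, ((Finset.univ.filter fun c : C =>
          ∃ i : Fin 3, ∀ t : Fin k, f t ∉ rc i c).card : ℝ))
      = ∑ c : C, ((Finset.univ.filter fun f : Fin k → C =>
          ∃ i : Fin 3, ∀ t : Fin k, f t ∉ rc i c).card : ℝ) := by
    simp only [Finset.card_filter]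
    push_cast
    exact Finset.sum_comm
  have hmul : ∀ m : ℝ, (n - m) ^ k = (1 - m / n) ^ k * n ^ k := by
    intro m
    rw [← mul_pow]
    congr 1
    field_simp
  rw [hswap, Finset.sum_div]
  have hcell' : ∀ c : C,
      ((Finset.univ.filter fun f : Fin k → C =>
          ∃ i : Fin 3, ∀ t : Fin k, f t ∉ rc i c).card : ℝ) / n ^ k
      = (1 - ((rc 0 c).card : ℝ)/n)^k + (1 - ((rc 1 c).card : ℝ)/n)^k
          + (1 - ((rc 2 c).card : ℝ)/n)^k
        - (1 - (((rc 0 c).card : ℝ) + ((rc 1 c).card : ℝ) - 1)/n)^k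
        - (1 - (((rc 0 c).card : ℝ) + ((rc 2 c).card : ℝ) - 1)/n)^k
        - (1 - (((rc 1 c).card : ℝ) + ((rc 2 c).card : ℝ) - 1)/n)^k
        + (1 - (((rc 0 c).card : ℝ) + ((rc 1 c).card : ℝ)
            + ((rc 2 c).card : ℝ) - 2)/n)^k := by
    intro c
    rw [hcell c, hmul, hmul, hmul, hmul, hmul, hmul, hmul,
      div_eq_iff (ne_of_gt hnk)]
    ring
  rw [Finset.sum_congr rfl fun c _ => hcell' c]
  -- split the sum of cells
  simp only [Finset.sum_add_distrib, Finset.sum_sub_distrib]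
  -- rewrite the ray sums as cell sums
  have hray : ∀ i : Fin 3,
      (∑ s ∈ Ri i, (s.card : ℝ) * (1 - (s.card : ℝ) / n) ^ k)
      = ∑ c : C, (1 - ((rc i c).card : ℝ)/n)^k := by
    intro i
    exact (sum_fiber (Ri i) (rc i) (hmem i) (huniq i)
      (fun s => (1 - (s.card : ℝ) / n) ^ k)).symm
  have hpairs : Finset.univ.filter (fun p : Fin 3 × Fin 3 => p.1 < p.2)
      = ({(0,1),(0,2),(1,2)} : Finset (Fin 3 × Fin 3)) := by decide
  rw [Fin.sum_univ_three, hray 0, hray 1, hray 2, hpairs,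
    Finset.sum_insert (by decide), Finset.sum_insert (by decide),
    Finset.sum_singleton]
  ring
end

section
/- Assume every cell of C is incident with exactly 3 rays of R and every ray of R is nonempty, and let p̄ = max_{r∈R} p_r (so 0 ≤ p̄ < 1). Let N_R^0 = Σ_{r∈R} p_r^k be the expected number of zero measurements for a random seeding with sparsity parameter k ≥ 1. Then for every δ > 0, Pr[ |X − N_R^0| ≥ δ ] ≤ 2 exp( − (1 − p̄²) δ² / (18 (1 − p̄^{2k})) ). -/
open scoped Classical

open Finset

namespace Stmt8Aux
set_option linter.unusedSectionVars false

variable {C ι : Type*} [Fintype C] [Nonempty C] [DecidableEq C] [Fintype ι]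

noncomputable def pp (ray : ι → Finset C) (r : ι) : ℝ :=
  1 - ((ray r).card : ℝ) / (Fintype.card C : ℝ)

noncomputable def wgt (ray : ι → Finset C) {k : ℕ} (t : ℕ) (r : ι) (f : Fin k → C) : ℝ :=
  ∏ s ∈ univ.filter (fun s : Fin k => (s : ℕ) < t), if f s ∈ ray r then (0:ℝ) else 1

noncomputable def hh (ray : ι → Finset C) (k t : ℕ) (f : Fin k → C) : ℝ :=
  ∑ r : ι, wgt ray t r f * (pp ray r) ^ (k - t)

lemma wgt_nonneg (ray : ι → Finset C) {k : ℕ} (t : ℕ) (r : ι) (f : Fin k → C) :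
    0 ≤ wgt ray t r f :=
  Finset.prod_nonneg fun s _ => by split <;> norm_num

lemma wgt_le_one (ray : ι → Finset C) {k : ℕ} (t : ℕ) (r : ι) (f : Fin k → C) :
    wgt ray t r f ≤ 1 :=
  Finset.prod_le_one (fun s _ => by split <;> norm_num)
    (fun s _ => by split <;> norm_num)

lemma wgt_update (ray : ι → Finset C) {k : ℕ} (t : ℕ) (r : ι) (f : Fin k → C)
    (t' : Fin k) (ht' : t ≤ (t' : ℕ)) (c : C) :
    wgt ray t r (Function.update f t' c) = wgt ray t r f := by
  apply Finset.prod_congr rfl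
  intro s hs
  have hs' : (s : ℕ) < t := (Finset.mem_filter.mp hs).2
  have : s ≠ t' := by
    intro h
    rw [h] at hs'
    omega
  rw [Function.update_of_ne this]

lemma wgt_succ (ray : ι → Finset C) {k : ℕ} (t : ℕ) (r : ι) (f : Fin k → C)
    (t' : Fin k) (ht' : (t' : ℕ) = t) :
    wgt ray (t+1) r f = (if f t' ∈ ray r then (0:ℝ) else 1) * wgt ray t r f := by
  unfold wgt
  have hset : univ.filter (fun s : Fin k => (s : ℕ) < t + 1)
      = insert t' (univ.filter (fun s : Fin k => (s : ℕ) < t)) := by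
    ext s
    simp only [Finset.mem_filter, Finset.mem_univ, true_and, Finset.mem_insert]
    constructor
    · intro hs
      rcases Nat.lt_succ_iff_lt_or_eq.mp hs with h | h
      · exact Or.inr h
      · exact Or.inl (Fin.ext (by omega))
    · rintro (rfl | h)
      · omega
      · omega
  rw [hset, Finset.prod_insert (by simp [ht'])]

lemma wgt_zero (ray : ι → Finset C) {k : ℕ} (r : ι) (f : Fin k → C) :
    wgt ray 0 r f = 1 := by
  unfold wgt
  rw [Finset.filter_false_of_mem, Finset.prod_empty]
  intro s _
  omega

lemma wgt_full (ray : ι → Finset C) {k : ℕ} (r : ι) (f : Fin k → C) :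
    wgt ray k r f = if (∀ s : Fin k, f s ∉ ray r) then (1:ℝ) else 0 := by
  unfold wgt
  have hset : univ.filter (fun s : Fin k => (s : ℕ) < k) = univ := by
    apply Finset.filter_true_of_mem
    intro s _
    exact s.isLt
  rw [hset]
  by_cases hr : ∀ s : Fin k, f s ∉ ray r
  · rw [if_pos hr]
    exact Finset.prod_eq_one fun s _ => by rw [if_neg (hr s)]
  · rw [if_neg hr]
    push_neg at hr
    obtain ⟨s, hs⟩ := hr
    exact Finset.prod_eq_zero (Finset.mem_univ s) (by rw [if_pos hs])

lemma hh_zero (ray : ι → Finset C) (k : ℕ) (f : Fin k → C) :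
    hh ray k 0 f = ∑ r : ι, (pp ray r) ^ k := by
  unfold hh
  exact Finset.sum_congr rfl fun r _ => by rw [wgt_zero, one_mul, Nat.sub_zero]

lemma hh_full (ray : ι → Finset C) (k : ℕ) (f : Fin k → C) :
    hh ray k k f
      = ((univ.filter fun r : ι => ∀ t : Fin k, f t ∉ ray r).card : ℝ) := by
  unfold hh
  rw [Finset.card_filter]
  push_cast
  apply Finset.sum_congr rfl
  intro r _
  rw [wgt_full, Nat.sub_self, pow_zero, mul_one]

lemma hh_update (ray : ι → Finset C) (k t : ℕ) (f : Fin k → C)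
    (t' : Fin k) (ht' : t ≤ (t' : ℕ)) (c : C) :
    hh ray k t (Function.update f t' c) = hh ray k t f :=
  Finset.sum_congr rfl fun r _ => by rw [wgt_update ray t r f t' ht' c]

-- count of cells off a ray
lemma sum_ite_off (ray : ι → Finset C) (r : ι) :
    ∑ c : C, (if c ∈ ray r then (0:ℝ) else 1)
      = (Fintype.card C : ℝ) - ((ray r).card : ℝ) := by
  have h1 : ∑ c : C, (if c ∈ ray r then (0:ℝ) else 1)
      = ∑ c : C, ((1:ℝ) - if c ∈ ray r then 1 else 0) := by
    apply Finset.sum_congr rfl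
    intro c _
    split <;> norm_num
  rw [h1, Finset.sum_sub_distrib]
  simp [Finset.sum_boole, Finset.filter_univ_mem]

lemma hh_mean_zero (ray : ι → Finset C) (k t : ℕ) (htk : t < k) (f : Fin k → C)
    (t' : Fin k) (ht' : (t' : ℕ) = t) :
    ∑ c : C, hh ray k (t+1) (Function.update f t' c)
      = (Fintype.card C : ℝ) * hh ray k t f := by
  unfold hh
  rw [Finset.sum_comm, Finset.mul_sum]
  apply Finset.sum_congr rfl
  intro r _
  have key : ∀ c : C, wgt ray (t+1) r (Function.update f t' c)
      = (if c ∈ ray r then (0:ℝ) else 1) * wgt ray t r f := by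
    intro c
    rw [wgt_succ ray t r _ t' ht', Function.update_self,
      wgt_update ray t r f t' (le_of_eq ht'.symm) c]
  have hsum : ∑ c : C, wgt ray (t+1) r (Function.update f t' c) * pp ray r ^ (k - (t+1))
      = ((Fintype.card C : ℝ) - ((ray r).card : ℝ)) * (wgt ray t r f * pp ray r ^ (k - (t+1))) := by
    simp only [key]
    rw [← Finset.sum_mul, ← Finset.sum_mul, sum_ite_off]
    ring
  rw [hsum]
  have hC : (0:ℝ) < (Fintype.card C : ℝ) := by exact_mod_cast Fintype.card_pos
  have hn : ((Fintype.card C : ℝ) - ((ray r).card : ℝ))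
      = (Fintype.card C : ℝ) * pp ray r := by
    unfold pp
    field_simp
  have hkt : k - t = (k - (t+1)) + 1 := by omega
  rw [hn, hkt, pow_succ]
  ring


lemma sum_ite_deg (ray : ι → Finset C)
    (hdeg : ∀ c : C, (univ.filter fun r : ι => c ∈ ray r).card = 3) (c : C) :
    ∑ r : ι, (if c ∈ ray r then (1:ℝ) else 0) = 3 := by
  rw [Finset.sum_boole]
  rw [hdeg c]
  norm_num

lemma hh_bound (ray : ι → Finset C)
    (hdeg : ∀ c : C, (univ.filter fun r : ι => c ∈ ray r).card = 3)
    (hq3 : ∑ r : ι, ((ray r).card : ℝ) / (Fintype.card C : ℝ) = 3)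
    (pb : ℝ) (hpb0 : 0 ≤ pb) (hpb1 : pb ≤ 1)
    (hp0 : ∀ r, 0 ≤ pp ray r) (hple : ∀ r, pp ray r ≤ pb)
    (k t : ℕ) (htk : t < k) (f : Fin k → C)
    (t' : Fin k) (ht' : (t' : ℕ) = t) (c : C) :
    |hh ray k (t+1) (Function.update f t' c) - hh ray k t f|
      ≤ 3 * pb ^ (k - (t+1)) := by
  set e := k - (t+1) with he
  have hkt : k - t = e + 1 := by omega
  have hdiff : hh ray k (t+1) (Function.update f t' c) - hh ray k t f
      = ∑ r : ι, wgt ray t r f * ((if c ∈ ray r then (0:ℝ) else 1) - pp ray r)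
          * pp ray r ^ e := by
    unfold hh
    rw [← Finset.sum_sub_distrib]
    apply Finset.sum_congr rfl
    intro r _
    rw [wgt_succ ray t r _ t' ht', Function.update_self,
      wgt_update ray t r f t' (le_of_eq ht'.symm) c, hkt, pow_succ]
    ring
  rw [hdiff, abs_le]
  have hppow : ∀ r : ι, pp ray r ^ e ≤ pb ^ e := fun r =>
    pow_le_pow_left₀ (hp0 r) (hple r) e
  have hppow0 : ∀ r : ι, (0:ℝ) ≤ pp ray r ^ e := fun r => pow_nonneg (hp0 r) e
  have hpbe0 : (0:ℝ) ≤ pb ^ e := pow_nonneg hpb0 e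
  constructor
  · -- lower bound
    have hterm : ∀ r : ι,
        -((if c ∈ ray r then (1:ℝ) else 0) * pb ^ e)
          ≤ wgt ray t r f * ((if c ∈ ray r then (0:ℝ) else 1) - pp ray r)
              * pp ray r ^ e := by
      intro r
      by_cases hc : c ∈ ray r
      · simp only [if_pos hc]
        have h1 : wgt ray t r f * ((0:ℝ) - pp ray r) * pp ray r ^ e
            = -(wgt ray t r f * (pp ray r * pp ray r ^ e)) := by ring
        rw [h1, neg_le_neg_iff]
        have h2 : pp ray r * pp ray r ^ e ≤ pb * pb ^ e :=
          mul_le_mul (hple r) (hppow r) (hppow0 r) hpb0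
        have h3 : pb * pb ^ e ≤ 1 * pb ^ e :=
          mul_le_mul_of_nonneg_right hpb1 hpbe0
        have h4 : wgt ray t r f * (pp ray r * pp ray r ^ e) ≤ 1 * (pb * pb ^ e) :=
          mul_le_mul (wgt_le_one ray t r f) h2
            (mul_nonneg (hp0 r) (hppow0 r)) zero_le_one
        nlinarith [wgt_nonneg ray t r f]
      · simp only [if_neg hc]
        have : (0:ℝ) ≤ wgt ray t r f * ((1:ℝ) - pp ray r) * pp ray r ^ e := by
          apply mul_nonneg (mul_nonneg (wgt_nonneg ray t r f) _) (hppow0 r)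
          unfold pp
          have : (0:ℝ) ≤ ((ray r).card : ℝ) / (Fintype.card C : ℝ) := by positivity
          linarith
        linarith
    calc -(3 * pb ^ e) = -∑ r : ι, (if c ∈ ray r then (1:ℝ) else 0) * pb ^ e := by
          rw [← Finset.sum_mul, sum_ite_deg ray hdeg c]
      _ ≤ _ := by
          rw [neg_le, ← Finset.sum_neg_distrib]
          exact Finset.sum_le_sum fun r _ => by
            have := hterm r
            linarith
  · -- upper bound
    have hterm : ∀ r : ι,
        wgt ray t r f * ((if c ∈ ray r then (0:ℝ) else 1) - pp ray r) * pp ray r ^ e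
          ≤ ((ray r).card : ℝ) / (Fintype.card C : ℝ) * pb ^ e := by
      intro r
      have hq0 : (0:ℝ) ≤ ((ray r).card : ℝ) / (Fintype.card C : ℝ) := by positivity
      by_cases hc : c ∈ ray r
      · simp only [if_pos hc]
        have h1 : wgt ray t r f * ((0:ℝ) - pp ray r) * pp ray r ^ e
            = -(wgt ray t r f * pp ray r * pp ray r ^ e) := by ring
        rw [h1]
        have : (0:ℝ) ≤ wgt ray t r f * pp ray r * pp ray r ^ e :=
          mul_nonneg (mul_nonneg (wgt_nonneg ray t r f) (hp0 r)) (hppow0 r)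
        nlinarith [mul_nonneg hq0 hpbe0]
      · simp only [if_neg hc]
        have hq : (1:ℝ) - pp ray r = ((ray r).card : ℝ) / (Fintype.card C : ℝ) := by
          unfold pp; ring
        rw [hq]
        calc wgt ray t r f * (((ray r).card : ℝ) / (Fintype.card C : ℝ)) * pp ray r ^ e
            ≤ 1 * (((ray r).card : ℝ) / (Fintype.card C : ℝ)) * pb ^ e := by
              apply mul_le_mul _ (hppow r) (hppow0 r) (by positivity)
              exact mul_le_mul_of_nonneg_right (wgt_le_one ray t r f) hq0
          _ = _ := by ring
    calc ∑ r : ι, wgt ray t r f * ((if c ∈ ray r then (0:ℝ) else 1) - pp ray r)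
          * pp ray r ^ e
        ≤ ∑ r : ι, ((ray r).card : ℝ) / (Fintype.card C : ℝ) * pb ^ e :=
          Finset.sum_le_sum fun r _ => hterm r
      _ = 3 * pb ^ e := by rw [← Finset.sum_mul, hq3]


lemma sum_update {k : ℕ} (t : Fin k) (G : (Fin k → C) → ℝ) :
    ∑ f : Fin k → C, ∑ c : C, G (Function.update f t c)
      = (Fintype.card C : ℝ) * ∑ f : Fin k → C, G f := by
  classical
  have hinv : Function.Involutive
      (fun p : (Fin k → C) × C => (Function.update p.1 t p.2, p.1 t)) := by
    intro p
    simp [Function.update_idem]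
  have h1 : ∑ f : Fin k → C, ∑ c : C, G (Function.update f t c)
      = ∑ p : (Fin k → C) × C, G (Function.update p.1 t p.2) := by
    rw [Fintype.sum_prod_type]
  have h2 : ∑ p : (Fin k → C) × C, G (Function.update p.1 t p.2)
      = ∑ p : (Fin k → C) × C, G p.1 :=
    Fintype.sum_bijective _ hinv.bijective _ _ (fun p => rfl)
  rw [h1, h2, Fintype.sum_prod_type]
  simp only [Finset.sum_const, nsmul_eq_mul, Finset.card_univ]
  rw [← Finset.mul_sum]

lemma step_exp (Y : C → ℝ) (a l : ℝ) (ha : 0 ≤ a) (hb : ∀ c, |Y c| ≤ a)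
    (h0 : ∑ c : C, Y c = 0) :
    ∑ c : C, Real.exp (l * Y c)
      ≤ (Fintype.card C : ℝ) * Real.exp (l ^ 2 * a ^ 2 / 2) := by
  rcases ha.eq_or_lt with rfl | hpos
  · have hY : ∀ c, Y c = 0 := fun c => abs_nonpos_iff.mp (hb c)
    simp [hY]
  · have key : ∀ c, Real.exp (l * Y c)
        ≤ Real.cosh (l * a) + (Y c / a) * Real.sinh (l * a) := by
      intro c
      set θ : ℝ := (a + Y c) / (2 * a) with hθ
      have hYa : -a ≤ Y c ∧ Y c ≤ a := abs_le.mp (hb c)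
      have hθ0 : 0 ≤ θ := by
        apply div_nonneg _ (by linarith)
        linarith [hYa.1]
      have hθ1 : 0 ≤ 1 - θ := by
        rw [hθ]
        rw [sub_nonneg, div_le_one (by linarith)]
        linarith [hYa.2]
      have hsum : θ + (1 - θ) = 1 := by ring
      have hconv := convexOn_exp.2 (Set.mem_univ (l * a)) (Set.mem_univ (-(l * a)))
        hθ0 hθ1 hsum
      have harg : θ • (l * a) + (1 - θ) • (-(l * a)) = l * Y c := by
        simp only [smul_eq_mul, hθ]
        field_simp
        ring
      rw [harg] at hconv
      have hrhs : θ * Real.exp (l * a) + (1 - θ) * Real.exp (-(l * a))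
          = Real.cosh (l * a) + (Y c / a) * Real.sinh (l * a) := by
        rw [Real.cosh_eq, Real.sinh_eq, hθ]
        field_simp
        ring
      calc Real.exp (l * Y c) ≤ θ * Real.exp (l * a) + (1 - θ) * Real.exp (-(l * a)) := by
            simpa using hconv
        _ = _ := hrhs
    calc ∑ c : C, Real.exp (l * Y c)
        ≤ ∑ c : C, (Real.cosh (l * a) + (Y c / a) * Real.sinh (l * a)) :=
          Finset.sum_le_sum fun c _ => key c
      _ = (Fintype.card C : ℝ) * Real.cosh (l * a) := by
          rw [Finset.sum_add_distrib]
          simp [← Finset.sum_div, ← Finset.sum_mul, h0, Finset.sum_const, nsmul_eq_mul]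
      _ ≤ (Fintype.card C : ℝ) * Real.exp (l ^ 2 * a ^ 2 / 2) := by
          apply mul_le_mul_of_nonneg_left _ (by positivity)
          calc Real.cosh (l * a) ≤ Real.exp ((l * a) ^ 2 / 2) :=
              Real.cosh_le_exp_half_sq (l * a)
            _ = Real.exp (l ^ 2 * a ^ 2 / 2) := by rw [mul_pow]

lemma mgf_bound (ray : ι → Finset C)
    (hdeg : ∀ c : C, (univ.filter fun r : ι => c ∈ ray r).card = 3)
    (hq3 : ∑ r : ι, ((ray r).card : ℝ) / (Fintype.card C : ℝ) = 3)
    (pb : ℝ) (hpb0 : 0 ≤ pb) (hpb1 : pb ≤ 1)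
    (hp0 : ∀ r, 0 ≤ pp ray r) (hple : ∀ r, pp ray r ≤ pb)
    (k : ℕ) (l : ℝ) :
    ∀ t, t ≤ k →
      ∑ f : Fin k → C, Real.exp (l * (hh ray k t f - hh ray k 0 f))
        ≤ (Fintype.card C : ℝ) ^ k
            * Real.exp (l ^ 2 * (9/2) * ∑ i ∈ Finset.Ico (k - t) k, pb ^ (2*i)) := by
  intro t
  induction t with
  | zero =>
      intro _
      simp only [Nat.sub_zero, Finset.Ico_self, Finset.sum_empty, mul_zero,
        Real.exp_zero, mul_one, sub_self]
      rw [Finset.sum_const]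
      simp [Fintype.card_fun]
  | succ t ih =>
      intro htk1
      have htk : t < k := htk1
      have ihv := ih (le_of_lt htk)
      set t' : Fin k := ⟨t, htk⟩ with ht'def
      have ht' : (t' : ℕ) = t := rfl
      set G : (Fin k → C) → ℝ :=
        fun f => Real.exp (l * (hh ray k (t+1) f - hh ray k 0 f)) with hG
      have hCpos : (0:ℝ) < (Fintype.card C : ℝ) := by exact_mod_cast Fintype.card_pos
      set a : ℝ := 3 * pb ^ (k - (t+1)) with ha
      have ha0 : 0 ≤ a := by positivity
      have hinner : ∀ f : Fin k → C,
          ∑ c : C, G (Function.update f t' c)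
            ≤ Real.exp (l * (hh ray k t f - hh ray k 0 f))
                * ((Fintype.card C : ℝ) * Real.exp (l ^ 2 * a ^ 2 / 2)) := by
        intro f
        set Y : C → ℝ := fun c => hh ray k (t+1) (Function.update f t' c) - hh ray k t f
          with hY
        have hsplit : ∀ c : C, G (Function.update f t' c)
            = Real.exp (l * (hh ray k t f - hh ray k 0 f)) * Real.exp (l * Y c) := by
          intro c
          simp only [hG, hY]
          rw [hh_update ray k 0 f t' (by omega) c, ← Real.exp_add]
          congr 1
          ring
        have hb : ∀ c : C, |Y c| ≤ a :=
          fun c => hh_bound ray hdeg hq3 pb hpb0 hpb1 hp0 hple k t htk f t' ht' c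
        have h0 : ∑ c : C, Y c = 0 := by
          rw [hY]
          simp only
          rw [Finset.sum_sub_distrib, hh_mean_zero ray k t htk f t' ht',
            Finset.sum_const]
          simp [Finset.card_univ, nsmul_eq_mul]
        calc ∑ c : C, G (Function.update f t' c)
            = Real.exp (l * (hh ray k t f - hh ray k 0 f)) * ∑ c : C, Real.exp (l * Y c) := by
              rw [Finset.mul_sum]
              exact Finset.sum_congr rfl fun c _ => hsplit c
          _ ≤ _ := by
              apply mul_le_mul_of_nonneg_left
                (step_exp Y a l ha0 hb h0) (Real.exp_nonneg _)
      have hmain : (Fintype.card C : ℝ) * ∑ f : Fin k → C, G f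
          ≤ (Fintype.card C : ℝ) * Real.exp (l ^ 2 * a ^ 2 / 2)
              * ∑ f : Fin k → C, Real.exp (l * (hh ray k t f - hh ray k 0 f)) := by
        rw [← sum_update t' G]
        calc ∑ f : Fin k → C, ∑ c : C, G (Function.update f t' c)
            ≤ ∑ f : Fin k → C, Real.exp (l * (hh ray k t f - hh ray k 0 f))
                * ((Fintype.card C : ℝ) * Real.exp (l ^ 2 * a ^ 2 / 2)) :=
              Finset.sum_le_sum fun f _ => hinner f
          _ = _ := by rw [← Finset.sum_mul, mul_comm]
      have hstep : ∑ f : Fin k → C, G f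
          ≤ Real.exp (l ^ 2 * a ^ 2 / 2)
              * ∑ f : Fin k → C, Real.exp (l * (hh ray k t f - hh ray k 0 f)) := by
        have := hmain
        nlinarith [this, hCpos]
      calc ∑ f : Fin k → C, G f
          ≤ Real.exp (l ^ 2 * a ^ 2 / 2)
              * ((Fintype.card C : ℝ) ^ k
                * Real.exp (l ^ 2 * (9/2) * ∑ i ∈ Finset.Ico (k - t) k, pb ^ (2*i))) := by
            refine hstep.trans ?_
            exact mul_le_mul_of_nonneg_left ihv (Real.exp_nonneg _)
        _ = (Fintype.card C : ℝ) ^ k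
              * Real.exp (l ^ 2 * (9/2) * ∑ i ∈ Finset.Ico (k - (t+1)) k, pb ^ (2*i)) := by
            have hbot : k - (t+1) < k := by omega
            have hsucc : k - (t+1) + 1 = k - t := by omega
            have hsum' : ∑ i ∈ Finset.Ico (k - (t+1)) k, pb ^ (2*i)
                = pb ^ (2 * (k - (t+1))) + ∑ i ∈ Finset.Ico (k - t) k, pb ^ (2*i) := by
              rw [Finset.sum_eq_sum_Ico_succ_bot hbot, hsucc]
            have hasq : a ^ 2 = 9 * pb ^ (2 * (k - (t+1))) := by
              rw [ha, mul_pow, ← pow_mul, Nat.mul_comm]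
              norm_num
            have hexp : l ^ 2 * a ^ 2 / 2
                  + l ^ 2 * (9/2) * ∑ i ∈ Finset.Ico (k - t) k, pb ^ (2*i)
                = l ^ 2 * (9/2) * ∑ i ∈ Finset.Ico (k - (t+1)) k, pb ^ (2*i) := by
              rw [hsum', hasq]
              ring
            calc Real.exp (l ^ 2 * a ^ 2 / 2)
                  * ((Fintype.card C : ℝ) ^ k
                    * Real.exp (l ^ 2 * (9/2) * ∑ i ∈ Finset.Ico (k - t) k, pb ^ (2*i)))
                = (Fintype.card C : ℝ) ^ k
                    * (Real.exp (l ^ 2 * a ^ 2 / 2)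
                      * Real.exp (l ^ 2 * (9/2) * ∑ i ∈ Finset.Ico (k - t) k, pb ^ (2*i))) := by
                  ring
              _ = (Fintype.card C : ℝ) ^ k
                    * Real.exp (l ^ 2 * a ^ 2 / 2
                      + l ^ 2 * (9/2) * ∑ i ∈ Finset.Ico (k - t) k, pb ^ (2*i)) := by
                  rw [Real.exp_add]
              _ = _ := by rw [hexp]

lemma chernoff_count {α : Type*} [Fintype α] (W : α → ℝ) (d l : ℝ) (hl : 0 ≤ l) :
    ((univ.filter fun x : α => d ≤ W x).card : ℝ) * Real.exp (l * d)
      ≤ ∑ x : α, Real.exp (l * W x) := by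
  calc ((univ.filter fun x : α => d ≤ W x).card : ℝ) * Real.exp (l * d)
      = ∑ x ∈ univ.filter (fun x : α => d ≤ W x), Real.exp (l * d) := by
        rw [Finset.sum_const, nsmul_eq_mul]
    _ ≤ ∑ x ∈ univ.filter (fun x : α => d ≤ W x), Real.exp (l * W x) := by
        apply Finset.sum_le_sum
        intro x hx
        have hw : d ≤ W x := (Finset.mem_filter.mp hx).2
        exact Real.exp_le_exp.mpr (mul_le_mul_of_nonneg_left hw hl)
    _ ≤ ∑ x : α, Real.exp (l * W x) :=
        Finset.sum_le_sum_of_subset_of_nonneg (Finset.filter_subset _ _)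
          (fun x _ _ => Real.exp_nonneg _)

end Stmt8Aux

open Finset in
/-- Azuma-type tail bound for the number X of zero measurements:
if every cell is incident with exactly 3 rays, all rays are nonempty and
p̄ = max_r p_r, then for k ≥ 1 and every δ > 0,
Pr[|X − N_R^0| ≥ δ] ≤ 2 exp(−(1 − p̄²) δ² / (18 (1 − p̄^{2k}))). -/
theorem stmt_8 {C ι : Type*} [Fintype C] [Nonempty C] [DecidableEq C]
    [Fintype ι] [Nonempty ι]
    (ray : ι → Finset C)   -- the family R of rays (subsets of cells)
    (hdeg : ∀ c : C, (Finset.univ.filter fun r : ι => c ∈ ray r).card = 3)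
    (hray_ne : ∀ r : ι, (ray r).Nonempty)
    (pbar : ℝ)
    (hpbar : pbar = Finset.univ.sup' Finset.univ_nonempty
      (fun r : ι => 1 - ((ray r).card : ℝ) / (Fintype.card C : ℝ)))
    (k : ℕ) (hk : 1 ≤ k)
    (δ : ℝ) (hδ : 0 < δ) :
    ((Finset.univ.filter fun f : Fin k → C =>
        δ ≤ |((Finset.univ.filter fun r : ι => ∀ t : Fin k, f t ∉ ray r).card : ℝ)
            - ∑ r : ι, (1 - ((ray r).card : ℝ) / (Fintype.card C : ℝ)) ^ k|).card : ℝ)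
      / (Fintype.card C : ℝ) ^ k
    ≤ 2 * Real.exp (-((1 - pbar ^ 2) * δ ^ 2) / (18 * (1 - pbar ^ (2 * k)))) := by
  classical
  have hCpos : (0:ℝ) < (Fintype.card C : ℝ) := by exact_mod_cast Fintype.card_pos
  -- basic facts about pp and pbar
  have hp0 : ∀ r : ι, 0 ≤ Stmt8Aux.pp ray r := by
    intro r
    unfold Stmt8Aux.pp
    have h1 : ((ray r).card : ℝ) ≤ (Fintype.card C : ℝ) := by
      exact_mod_cast Finset.card_le_univ (ray r) |>.trans_eq Finset.card_univ
    have h2 : ((ray r).card : ℝ) / (Fintype.card C : ℝ) ≤ 1 :=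
      div_le_one_of_le₀ h1 hCpos.le
    linarith
  have hple : ∀ r : ι, Stmt8Aux.pp ray r ≤ pbar := by
    intro r
    rw [hpbar]
    exact Finset.le_sup' _ (Finset.mem_univ r)
  have hpb0 : 0 ≤ pbar := le_trans (hp0 (Classical.arbitrary ι)) (hple _)
  have hpblt : pbar < 1 := by
    rw [hpbar, Finset.sup'_lt_iff]
    intro r _
    have hpos : (0:ℝ) < ((ray r).card : ℝ) := by
      exact_mod_cast Finset.card_pos.mpr (hray_ne r)
    have : 0 < ((ray r).card : ℝ) / (Fintype.card C : ℝ) := div_pos hpos hCpos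
    linarith
  have hpb1 : pbar ≤ 1 := le_of_lt hpblt
  -- double counting
  have hNat : ∑ r : ι, (ray r).card = 3 * Fintype.card C := by
    have h1 : ∀ r : ι, (ray r).card = ∑ c : C, if c ∈ ray r then 1 else 0 := by
      intro r
      rw [Finset.sum_boole]
      simp [Finset.filter_univ_mem]
    calc ∑ r : ι, (ray r).card = ∑ r : ι, ∑ c : C, if c ∈ ray r then 1 else 0 :=
          Finset.sum_congr rfl fun r _ => h1 r
      _ = ∑ c : C, ∑ r : ι, if c ∈ ray r then 1 else 0 := Finset.sum_comm
      _ = ∑ c : C, 3 := by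
          apply Finset.sum_congr rfl
          intro c _
          rw [Finset.sum_boole]
          simp [hdeg c]
      _ = 3 * Fintype.card C := by
          rw [Finset.sum_const, Finset.card_univ, smul_eq_mul, mul_comm]
  have hq3 : ∑ r : ι, ((ray r).card : ℝ) / (Fintype.card C : ℝ) = 3 := by
    rw [← Finset.sum_div]
    have : (∑ r : ι, ((ray r).card : ℝ)) = 3 * (Fintype.card C : ℝ) := by
      exact_mod_cast hNat
    rw [this]
    field_simp
  -- the geometric sum
  set S : ℝ := ∑ i ∈ Finset.range k, pbar ^ (2*i) with hS
  have hS1 : (1:ℝ) ≤ S := by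
    have h := Finset.single_le_sum (f := fun i => pbar ^ (2*i))
      (fun i _ => by positivity) (Finset.mem_range.mpr (by omega : 0 < k))
    simpa using h
  have hSpos : (0:ℝ) < S := by linarith
  set lam : ℝ := δ / (9 * S) with hlam
  have hlam0 : 0 ≤ lam := by positivity
  -- MGF bound specialized
  have hmgf : ∀ l : ℝ,
      ∑ f : Fin k → C, Real.exp (l * (Stmt8Aux.hh ray k k f - Stmt8Aux.hh ray k 0 f))
        ≤ (Fintype.card C : ℝ) ^ k * Real.exp (l ^ 2 * (9/2) * S) := by
    intro l
    have h := Stmt8Aux.mgf_bound ray hdeg hq3 pbar hpb0 hpb1 hp0 hple k l k le_rfl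
    have hIco : Finset.Ico (k - k) k = Finset.range k := by
      rw [Nat.sub_self, ← Finset.range_eq_Ico]
    rwa [hIco, ← hS] at h
  -- identify X − μ with hh k − hh 0
  have hW : ∀ f : Fin k → C,
      ((Finset.univ.filter fun r : ι => ∀ t : Fin k, f t ∉ ray r).card : ℝ)
          - ∑ r : ι, (1 - ((ray r).card : ℝ) / (Fintype.card C : ℝ)) ^ k
        = Stmt8Aux.hh ray k k f - Stmt8Aux.hh ray k 0 f := by
    intro f
    rw [Stmt8Aux.hh_full, Stmt8Aux.hh_zero]
    rfl
  set W : (Fin k → C) → ℝ :=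
    fun f => Stmt8Aux.hh ray k k f - Stmt8Aux.hh ray k 0 f with hWdef
  -- split the event
  have hsubset :
      (Finset.univ.filter fun f : Fin k → C =>
        δ ≤ |((Finset.univ.filter fun r : ι => ∀ t : Fin k, f t ∉ ray r).card : ℝ)
            - ∑ r : ι, (1 - ((ray r).card : ℝ) / (Fintype.card C : ℝ)) ^ k|)
      ⊆ (Finset.univ.filter fun f : Fin k → C => δ ≤ W f)
        ∪ (Finset.univ.filter fun f : Fin k → C => δ ≤ -(W f)) := by
    intro f hf
    have hf' : δ ≤ |W f| := by
      have := (Finset.mem_filter.mp hf).2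
      rwa [hW f] at this
    rcases le_abs.mp hf' with h | h
    · exact Finset.mem_union_left _ (Finset.mem_filter.mpr ⟨Finset.mem_univ f, h⟩)
    · exact Finset.mem_union_right _ (Finset.mem_filter.mpr ⟨Finset.mem_univ f, h⟩)
  have hexppos : (0:ℝ) < Real.exp (lam * δ) := Real.exp_pos _
  -- Chernoff both sides
  have hA1 : ((Finset.univ.filter fun f : Fin k → C => δ ≤ W f).card : ℝ)
      ≤ (Fintype.card C : ℝ) ^ k * Real.exp (lam ^ 2 * (9/2) * S - lam * δ) := by
    have h1 := Stmt8Aux.chernoff_count W δ lam hlam0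
    have h2 := hmgf lam
    rw [Real.exp_sub, ← mul_div_assoc, le_div_iff₀ hexppos]
    calc ((Finset.univ.filter fun f : Fin k → C => δ ≤ W f).card : ℝ) * Real.exp (lam * δ)
        ≤ ∑ f : Fin k → C, Real.exp (lam * W f) := h1
      _ ≤ (Fintype.card C : ℝ) ^ k * Real.exp (lam ^ 2 * (9/2) * S) := h2
  have hA2 : ((Finset.univ.filter fun f : Fin k → C => δ ≤ -(W f)).card : ℝ)
      ≤ (Fintype.card C : ℝ) ^ k * Real.exp (lam ^ 2 * (9/2) * S - lam * δ) := by
    have h1 := Stmt8Aux.chernoff_count (fun f => -(W f)) δ lam hlam0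
    have h2 := hmgf (-lam)
    rw [Real.exp_sub, ← mul_div_assoc, le_div_iff₀ hexppos]
    calc ((Finset.univ.filter fun f : Fin k → C => δ ≤ -(W f)).card : ℝ) * Real.exp (lam * δ)
        ≤ ∑ f : Fin k → C, Real.exp (lam * -(W f)) := h1
      _ = ∑ f : Fin k → C, Real.exp ((-lam) * W f) := by
          apply Finset.sum_congr rfl
          intro f _
          rw [← neg_mul_comm]
      _ ≤ (Fintype.card C : ℝ) ^ k * Real.exp ((-lam) ^ 2 * (9/2) * S) := h2
      _ = (Fintype.card C : ℝ) ^ k * Real.exp (lam ^ 2 * (9/2) * S) := by rw [neg_pow]; norm_num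
  -- the exponent computation
  have hpb2 : pbar ^ 2 < 1 := by nlinarith
  have hpb2k : pbar ^ (2*k) < 1 := pow_lt_one₀ hpb0 hpblt (by omega)
  have hS2 : S = (1 - pbar ^ (2*k)) / (1 - pbar ^ 2) := by
    rw [hS]
    have hrw : ∀ i : ℕ, pbar ^ (2*i) = (pbar ^ 2) ^ i := fun i => pow_mul pbar 2 i
    simp_rw [hrw]
    rw [geom_sum_eq (by nlinarith : pbar ^ 2 ≠ 1) k, ← pow_mul,
      ← neg_sub (1:ℝ) (pbar ^ (2*k)), ← neg_sub (1:ℝ) (pbar ^ 2), neg_div_neg_eq]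
  have hexpeq : lam ^ 2 * (9/2) * S - lam * δ
      = -((1 - pbar ^ 2) * δ ^ 2) / (18 * (1 - pbar ^ (2 * k))) := by
    have h1 : lam ^ 2 * (9/2) * S - lam * δ = -(δ ^ 2) / (18 * S) := by
      rw [hlam]
      field_simp
      ring
    rw [h1, hS2]
    have hne1 : (1:ℝ) - pbar ^ 2 ≠ 0 := by nlinarith
    have hne2 : (1:ℝ) - pbar ^ (2*k) ≠ 0 := by nlinarith
    field_simp
  -- put it together
  rw [div_le_iff₀ (by positivity)]
  calc ((Finset.univ.filter fun f : Fin k → C =>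
        δ ≤ |((Finset.univ.filter fun r : ι => ∀ t : Fin k, f t ∉ ray r).card : ℝ)
            - ∑ r : ι, (1 - ((ray r).card : ℝ) / (Fintype.card C : ℝ)) ^ k|).card : ℝ)
      ≤ (((Finset.univ.filter fun f : Fin k → C => δ ≤ W f)
          ∪ (Finset.univ.filter fun f : Fin k → C => δ ≤ -(W f))).card : ℝ) := by
        exact_mod_cast Finset.card_le_card hsubset
    _ ≤ ((Finset.univ.filter fun f : Fin k → C => δ ≤ W f).card : ℝ)
        + ((Finset.univ.filter fun f : Fin k → C => δ ≤ -(W f)).card : ℝ) := by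
        exact_mod_cast Finset.card_union_le _ _
    _ ≤ 2 * ((Fintype.card C : ℝ) ^ k * Real.exp (lam ^ 2 * (9/2) * S - lam * δ)) := by
        linarith
    _ = 2 * Real.exp (-((1 - pbar ^ 2) * δ ^ 2) / (18 * (1 - pbar ^ (2 * k))))
          * (Fintype.card C : ℝ) ^ k := by
        rw [hexpeq]
        ring
end

section
/- Assume every cell of C is incident with exactly 3 rays of R, and let p̄ = max_{r∈R} p_r. Then for every subset R⁰ ⊆ R, every cell c ∈ C, and every integer j ≥ 0, writing R⁰' = {r ∈ R⁰ : c ∉ r}, one has | Σ_{r∈R⁰'} p_r^{j} − Σ_{r∈R⁰} p_r^{j+1} | ≤ 3 p̄^{j}. (This is the bounded-increment property of the Doob martingale Y_i = E[X | F_i] of zero measurements used in the tail bound: revealing one more randomly seeded cell changes the conditional expectation by at most 3 p̄^{k−i}.) -/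
/-- Bounded-increment property of the Doob martingale of zero
measurements: if every cell is incident with exactly 3 rays and p̄ = max_r p_r,
then for every R⁰ ⊆ R, every cell c and every j ≥ 0, with
R⁰' = {r ∈ R⁰ : c ∉ r}, one has
| Σ_{r∈R⁰'} p_r^j − Σ_{r∈R⁰} p_r^{j+1} | ≤ 3 p̄^j. -/
theorem stmt_9 {C ι : Type*} [Fintype C] [Nonempty C] [DecidableEq C]
    [Fintype ι] [Nonempty ι] [DecidableEq ι]
    (ray : ι → Finset C)   -- the family R of rays (subsets of cells)
    (hdeg : ∀ c : C, (Finset.univ.filter fun r : ι => c ∈ ray r).card = 3)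
    (pbar : ℝ)
    (hpbar : pbar = Finset.univ.sup' Finset.univ_nonempty
      (fun r : ι => 1 - ((ray r).card : ℝ) / (Fintype.card C : ℝ)))
    (R0 : Finset ι) (c : C) (j : ℕ) :
    |(∑ r ∈ R0.filter (fun r => c ∉ ray r),
        (1 - ((ray r).card : ℝ) / (Fintype.card C : ℝ)) ^ j)
      - ∑ r ∈ R0, (1 - ((ray r).card : ℝ) / (Fintype.card C : ℝ)) ^ (j + 1)|
    ≤ 3 * pbar ^ j := by
  have hn : (0:ℝ) < (Fintype.card C : ℝ) := by exact_mod_cast Fintype.card_pos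
  set n : ℝ := (Fintype.card C : ℝ) with hnn
  set p : ι → ℝ := fun r => 1 - ((ray r).card : ℝ) / n with hpdef
  set q : ι → ℝ := fun r => ((ray r).card : ℝ) / n with hqdef
  have hq0 : ∀ r, 0 ≤ q r := fun r => by positivity
  have hp0 : ∀ r, 0 ≤ p r := by
    intro r
    have h1 : ((ray r).card : ℝ) ≤ n := by rw [hnn]; exact_mod_cast Finset.card_le_univ (ray r)
    have h2 : ((ray r).card : ℝ) / n ≤ 1 := div_le_one_of_le₀ h1 hn.le
    simp only [hpdef]; linarith
  have hp1 : ∀ r, p r ≤ 1 := fun r => by have := hq0 r; simp only [hpdef]; simp only [hqdef] at this; linarith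
  have hle : ∀ r, p r ≤ pbar := fun r => by
    rw [hpbar]; exact Finset.le_sup' _ (Finset.mem_univ r)
  have hpbar0 : 0 ≤ pbar := le_trans (hp0 (Classical.arbitrary ι)) (hle _)
  have hpbar1 : pbar ≤ 1 := by
    rw [hpbar]; exact Finset.sup'_le _ _ fun r _ => hp1 r
  -- sum of q over all rays = 3
  have hcards : ∑ r : ι, ((ray r).card : ℝ) = 3 * n := by
    have key : ∑ r : ι, (ray r).card = ∑ c' : C, (Finset.univ.filter fun r : ι => c' ∈ ray r).card := by
      simp_rw [Finset.card_filter]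
      rw [Finset.sum_comm]
      congr 1
      ext r
      rw [← Finset.card_filter]
      congr 1
      ext c'
      simp
    have : ∑ r : ι, ((ray r).card : ℝ) = ((∑ r : ι, (ray r).card : ℕ) : ℝ) := by push_cast; ring
    rw [this, key]
    simp only [hdeg]
    simp [Finset.sum_const, hnn]
    ring
  have hqsum : ∑ r : ι, q r = 3 := by
    simp only [hqdef, div_eq_mul_inv, ← Finset.sum_mul, hcards]
    field_simp
  -- split R0
  set S : Finset ι := R0.filter (fun r => c ∉ ray r) with hS
  set T : Finset ι := R0.filter (fun r => c ∈ ray r) with hT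
  have hsplit : ∑ r ∈ R0, p r ^ (j+1) = (∑ r ∈ S, p r ^ (j+1)) + ∑ r ∈ T, p r ^ (j+1) := by
    rw [hS, hT, ← Finset.sum_filter_add_sum_filter_not R0 (fun r => c ∉ ray r)]
    congr 1
    apply Finset.sum_congr _ (fun _ _ => rfl)
    congr 1; ext r; simp
  have hpbarpow0 : (0:ℝ) ≤ pbar ^ j := pow_nonneg hpbar0 j
  -- upper bound
  have hupper : (∑ r ∈ S, p r ^ j) - ∑ r ∈ R0, p r ^ (j+1) ≤ 3 * pbar ^ j := by
    have h1 : (∑ r ∈ S, p r ^ j) - ∑ r ∈ S, p r ^ (j+1) ≤ 3 * pbar ^ j := by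
      rw [← Finset.sum_sub_distrib]
      have heach : ∀ r ∈ S, p r ^ j - p r ^ (j+1) ≤ pbar ^ j * q r := by
        intro r _
        have : p r ^ j - p r ^ (j+1) = p r ^ j * q r := by
          simp only [hpdef, hqdef]; ring
        rw [this]
        exact mul_le_mul_of_nonneg_right (pow_le_pow_left₀ (hp0 r) (hle r) j) (hq0 r)
      calc ∑ r ∈ S, (p r ^ j - p r ^ (j+1)) ≤ ∑ r ∈ S, pbar ^ j * q r :=
            Finset.sum_le_sum heach
        _ ≤ ∑ r : ι, pbar ^ j * q r := by
            apply Finset.sum_le_sum_of_subset_of_nonneg (Finset.subset_univ S)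
            intro r _ _; exact mul_nonneg hpbarpow0 (hq0 r)
        _ = 3 * pbar ^ j := by rw [← Finset.mul_sum, hqsum]; ring
    have h2 : (0:ℝ) ≤ ∑ r ∈ T, p r ^ (j+1) :=
      Finset.sum_nonneg fun r _ => pow_nonneg (hp0 r) _
    rw [hsplit]; linarith
  -- lower bound
  have hlower : -(3 * pbar ^ j) ≤ (∑ r ∈ S, p r ^ j) - ∑ r ∈ R0, p r ^ (j+1) := by
    have h1 : ∑ r ∈ S, p r ^ (j+1) ≤ ∑ r ∈ S, p r ^ j := by
      apply Finset.sum_le_sum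
      intro r _
      exact pow_le_pow_of_le_one (hp0 r) (hp1 r) (Nat.le_succ j)
    have hTcard : T.card ≤ 3 := by
      rw [← hdeg c]
      apply Finset.card_le_card
      rw [hT]
      intro r hr
      simp only [Finset.mem_filter] at hr ⊢
      exact ⟨Finset.mem_univ r, hr.2⟩
    have h2 : ∑ r ∈ T, p r ^ (j+1) ≤ 3 * pbar ^ j := by
      calc ∑ r ∈ T, p r ^ (j+1) ≤ ∑ r ∈ T, pbar ^ j :=
            Finset.sum_le_sum fun r _ => by
              calc p r ^ (j+1) ≤ pbar ^ (j+1) := pow_le_pow_left₀ (hp0 r) (hle r) _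
                _ ≤ pbar ^ j := pow_le_pow_of_le_one hpbar0 hpbar1 (Nat.le_succ j)
        _ = T.card * pbar ^ j := by rw [Finset.sum_const, nsmul_eq_mul]
        _ ≤ 3 * pbar ^ j := by
            apply mul_le_mul_of_nonneg_right _ hpbarpow0
            exact_mod_cast hTcard
    rw [hsplit]; linarith
  rw [abs_le]
  exact ⟨hlower, hupper⟩
end

section
/- For the 4-camera cube geometry with problem size d ≥ 1 and a random seeding with sparsity parameter k, the expected number of zero measurements (pixels hit by no chosen cell, over all four directions) is N_R^0 = 4d( (1 − 1/d²)^k + 2 Σ_{s=1}^{d−1} (1 − s/d³)^k ), and hence the expected number of nonzero measurements is N_R = |R| − N_R^0 = 4d(2d − 1) − N_R^0, where |R| = 4d(2d − 1) is the total number of pixels. -/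
open Finset

lemma expcount {C : Type*} [Fintype C] [DecidableEq C] (k : ℕ) (π : C → ℤ × ℤ)
    (P : Finset (ℤ × ℤ)) :
    ∑ f : Fin k → C, ((P.filter fun p => ∀ t : Fin k, π (f t) ≠ p).card : ℝ)
      = ∑ p ∈ P, ((Finset.univ.filter fun c => π c ≠ p).card : ℝ) ^ k := by
  have h1 : ∀ f : Fin k → C, ((P.filter fun p => ∀ t : Fin k, π (f t) ≠ p).card : ℝ)
      = ∑ p ∈ P, ∏ t : Fin k, (if π (f t) ≠ p then (1:ℝ) else 0) := by
    intro f
    rw [Finset.card_filter]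
    push_cast
    refine Finset.sum_congr rfl fun p _ => ?_
    by_cases h : ∀ t, π (f t) ≠ p
    · rw [if_pos h]
      exact (Finset.prod_eq_one fun t _ => if_pos (h t)).symm
    · rw [if_neg h]
      push_neg at h
      obtain ⟨t, ht⟩ := h
      exact (Finset.prod_eq_zero (Finset.mem_univ t) (by simp [ht])).symm
  simp_rw [h1]
  rw [Finset.sum_comm]
  refine Finset.sum_congr rfl fun p _ => ?_
  have h2 := Finset.prod_univ_sum (fun _ : Fin k => (Finset.univ : Finset C))
    (fun _ c => if π c ≠ p then (1:ℝ) else 0)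
  rw [Fintype.piFinset_univ] at h2
  rw [← h2, Finset.prod_const, Finset.card_univ, Fintype.card_fin]
  congr 1
  rw [Finset.card_filter]
  push_cast
  rfl

lemma count_diff_nonneg (d : ℕ) (s : ℤ) (h0 : 0 ≤ s) (hs : s.natAbs ≤ d) :
    ((Finset.univ : Finset (Fin d × Fin d)).filter fun il => (il.1 : ℤ) - il.2 = s).card
      = d - s.natAbs := by
  have hsn : (s.natAbs : ℤ) = s := Int.natAbs_of_nonneg h0
  rw [show d - s.natAbs = (Finset.range (d - s.natAbs)).card from (Finset.card_range _).symm]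
  refine Finset.card_bij' (fun il _ => (il.2 : ℕ)) (fun n hn =>
      (⟨n + s.natAbs, by simp [Finset.mem_range] at hn; omega⟩,
       ⟨n, by simp [Finset.mem_range] at hn; omega⟩)) ?_ ?_ ?_ ?_
  · rintro ⟨i, l⟩ ha
    simp only [Finset.mem_filter, Finset.mem_univ, true_and] at ha
    simp only [Finset.mem_range]
    have hi := i.isLt
    have hl := l.isLt
    omega
  · intro n hn
    simp only [Finset.mem_filter, Finset.mem_univ, true_and]
    simp only [Finset.mem_range] at hn
    show ((n + s.natAbs : ℕ) : ℤ) - ((n : ℕ) : ℤ) = s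
    omega
  · rintro ⟨i, l⟩ ha
    simp only [Finset.mem_filter, Finset.mem_univ, true_and] at ha
    have hi := i.isLt
    ext <;> simp <;> omega
  · intro n hn
    simp

lemma count_diff (d : ℕ) (s : ℤ) (hs : s.natAbs ≤ d) :
    ((Finset.univ : Finset (Fin d × Fin d)).filter fun il => (il.1 : ℤ) - il.2 = s).card
      = d - s.natAbs := by
  rcases le_or_gt 0 s with h | h
  · exact count_diff_nonneg d s h hs
  · have key : ((Finset.univ : Finset (Fin d × Fin d)).filter
        fun il => (il.1 : ℤ) - il.2 = s).card
        = ((Finset.univ : Finset (Fin d × Fin d)).filter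
        fun il => (il.1 : ℤ) - il.2 = -s).card := by
      refine Finset.card_bij' (fun il _ => il.swap) (fun il _ => il.swap) ?_ ?_ ?_ ?_
      · rintro ⟨i, l⟩ ha
        simp only [Finset.mem_filter, Finset.mem_univ, true_and, Prod.swap] at ha ⊢
        omega
      · rintro ⟨i, l⟩ ha
        simp only [Finset.mem_filter, Finset.mem_univ, true_and, Prod.swap] at ha ⊢
        omega
      · intro a _; simp
      · intro a _; simp
    rw [key, count_diff_nonneg d (-s) (by omega) (by omega)]
    congr 1
    omega

lemma count_sum (d : ℕ) (s : ℤ) (hs : s.natAbs ≤ d) :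
    ((Finset.univ : Finset (Fin d × Fin d)).filter
        fun il => (il.1 : ℤ) + il.2 = s + d - 1).card = d - s.natAbs := by
  rcases Nat.eq_zero_or_pos d with rfl | hd
  · simp [Finset.filter_eq_empty_iff]
  have key : ((Finset.univ : Finset (Fin d × Fin d)).filter
      fun il => (il.1 : ℤ) + il.2 = s + d - 1).card
      = ((Finset.univ : Finset (Fin d × Fin d)).filter
      fun il => (il.1 : ℤ) - il.2 = s).card := by
    refine Finset.card_bij' (fun il _ => (il.1, ⟨d - 1 - il.2.val, by omega⟩))
      (fun il _ => (il.1, ⟨d - 1 - il.2.val, by omega⟩)) ?_ ?_ ?_ ?_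
    · rintro ⟨i, l⟩ ha
      simp only [Finset.mem_filter, Finset.mem_univ, true_and] at ha ⊢
      have hl := l.isLt
      show (i : ℤ) - ((d - 1 - l.val : ℕ) : ℤ) = s
      omega
    · rintro ⟨i, l⟩ ha
      simp only [Finset.mem_filter, Finset.mem_univ, true_and] at ha ⊢
      have hl := l.isLt
      show (i : ℤ) + ((d - 1 - l.val : ℕ) : ℤ) = s + d - 1
      omega
    · rintro ⟨i, l⟩ _
      have hl := l.isLt
      ext
      · simp
      · show d - 1 - (d - 1 - l.val) = l.val
        omega
    · rintro ⟨i, l⟩ _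
      have hl := l.isLt
      ext
      · simp
      · show d - 1 - (d - 1 - l.val) = l.val
        omega
  rw [key, count_diff d s hs]

lemma split_count (d : ℕ) (A : Fin d → Fin d → Prop) [DecidablePred fun il : Fin d × Fin d => A il.1 il.2]
    [∀ i l, Decidable (A i l)] (B : Fin d → Prop) [DecidablePred B] :
    ((Finset.univ : Finset (Fin d × Fin d × Fin d)).filter fun c => A c.1 c.2.2 ∧ B c.2.1).card
      = ((Finset.univ : Finset (Fin d × Fin d)).filter fun il => A il.1 il.2).card
        * (Finset.univ.filter B).card := by
  rw [Finset.card_filter, Finset.card_filter, Finset.card_filter]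
  rw [Fintype.sum_prod_type]
  simp_rw [Fintype.sum_prod_type]
  have key : ∀ (p q : Prop) [Decidable p] [Decidable q],
      (if p ∧ q then (1:ℕ) else 0) = (if p then 1 else 0) * (if q then 1 else 0) := by
    intro p q _ _
    split_ifs <;> tauto
  simp_rw [key]
  rw [Finset.sum_mul]
  refine Finset.sum_congr rfl fun i _ => ?_
  rw [Finset.sum_mul]
  rw [Finset.sum_comm]
  refine Finset.sum_congr rfl fun l _ => ?_
  rw [Finset.mul_sum]

lemma count_snd (d : ℕ) (t : ℤ) (h1 : 1 ≤ t) (h2 : t ≤ d) :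
    ((Finset.univ : Finset (Fin d)).filter fun j : Fin d => (j : ℤ) + 1 = t).card = 1 := by
  rw [Finset.card_eq_one]
  refine ⟨⟨(t - 1).toNat, by omega⟩, ?_⟩
  ext j
  simp only [Finset.mem_filter, Finset.mem_univ, true_and, Finset.mem_singleton, Fin.ext_iff]
  omega

lemma fib1 (d : ℕ) (s t : ℤ) (hs : s.natAbs ≤ d) (h1 : 1 ≤ t) (h2 : t ≤ d) :
    ((Finset.univ : Finset (Fin d × Fin d × Fin d)).filter
        fun c => (((c.1 : ℤ) + 1) + ((c.2.2 : ℤ) + 1) - 1 - d, (c.2.1 : ℤ) + 1) = (s, t)).card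
      = d - s.natAbs := by
  have h : ∀ c : Fin d × Fin d × Fin d,
      ((((c.1 : ℤ) + 1) + ((c.2.2 : ℤ) + 1) - 1 - d, (c.2.1 : ℤ) + 1) = (s, t))
        ↔ (((c.1 : ℤ) + (c.2.2 : ℤ) = s + d - 1) ∧ ((c.2.1 : ℤ) + 1 = t)) := by
    intro c
    rw [Prod.mk.injEq]
    constructor <;> rintro ⟨h1, h2⟩ <;> exact ⟨by omega, by omega⟩
  simp only [h]
  rw [split_count d (fun i l => (i : ℤ) + (l : ℤ) = s + d - 1) (fun j => (j : ℤ) + 1 = t),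
    count_sum d s hs, count_snd d t h1 h2, mul_one]

lemma fib2 (d : ℕ) (s t : ℤ) (hs : s.natAbs ≤ d) (h1 : 1 ≤ t) (h2 : t ≤ d) :
    ((Finset.univ : Finset (Fin d × Fin d × Fin d)).filter
        fun c => (((c.1 : ℤ) + 1) - ((c.2.2 : ℤ) + 1), (c.2.1 : ℤ) + 1) = (s, t)).card
      = d - s.natAbs := by
  have h : ∀ c : Fin d × Fin d × Fin d,
      ((((c.1 : ℤ) + 1) - ((c.2.2 : ℤ) + 1), (c.2.1 : ℤ) + 1) = (s, t))
        ↔ (((c.1 : ℤ) - (c.2.2 : ℤ) = s) ∧ ((c.2.1 : ℤ) + 1 = t)) := by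
    intro c
    rw [Prod.mk.injEq]
    constructor <;> rintro ⟨h1, h2⟩ <;> exact ⟨by omega, by omega⟩
  simp only [h]
  rw [split_count d (fun i l => (i : ℤ) - (l : ℤ) = s) (fun j => (j : ℤ) + 1 = t),
    count_diff d s hs, count_snd d t h1 h2, mul_one]

lemma split_count' (d : ℕ) (A : Fin d → Fin d → Prop)
    [DecidablePred fun il : Fin d × Fin d => A il.1 il.2]
    [∀ i l, Decidable (A i l)] (B : Fin d → Prop) [DecidablePred B] :
    ((Finset.univ : Finset (Fin d × Fin d × Fin d)).filter fun c => A c.2.1 c.2.2 ∧ B c.1).card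
      = ((Finset.univ : Finset (Fin d × Fin d)).filter fun il => A il.1 il.2).card
        * (Finset.univ.filter B).card := by
  have : ((Finset.univ : Finset (Fin d × Fin d × Fin d)).filter fun c => A c.2.1 c.2.2 ∧ B c.1)
      = ((Finset.univ.filter B) ×ˢ ((Finset.univ : Finset (Fin d × Fin d)).filter fun il => A il.1 il.2)) := by
    ext c
    simp only [Finset.mem_filter, Finset.mem_univ, true_and, Finset.mem_product]
    tauto
  rw [this, Finset.card_product, Nat.mul_comm]

lemma fib3 (d : ℕ) (s t : ℤ) (h1 : 1 ≤ s) (h2 : s ≤ d) (ht : t.natAbs ≤ d) :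
    ((Finset.univ : Finset (Fin d × Fin d × Fin d)).filter
        fun c => ((c.1 : ℤ) + 1, ((c.2.1 : ℤ) + 1) + ((c.2.2 : ℤ) + 1) - 1 - d) = (s, t)).card
      = d - t.natAbs := by
  have h : ∀ c : Fin d × Fin d × Fin d,
      (((c.1 : ℤ) + 1, ((c.2.1 : ℤ) + 1) + ((c.2.2 : ℤ) + 1) - 1 - d) = (s, t))
        ↔ (((c.2.1 : ℤ) + (c.2.2 : ℤ) = t + d - 1) ∧ ((c.1 : ℤ) + 1 = s)) := by
    intro c
    rw [Prod.mk.injEq]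
    constructor <;> rintro ⟨h1, h2⟩ <;> exact ⟨by omega, by omega⟩
  simp only [h]
  rw [split_count' d (fun j l => (j : ℤ) + (l : ℤ) = t + d - 1) (fun i => (i : ℤ) + 1 = s),
    count_sum d t ht, count_snd d s h1 h2, mul_one]

lemma fib4 (d : ℕ) (s t : ℤ) (h1 : 1 ≤ s) (h2 : s ≤ d) (ht : t.natAbs ≤ d) :
    ((Finset.univ : Finset (Fin d × Fin d × Fin d)).filter
        fun c => ((c.1 : ℤ) + 1, ((c.2.1 : ℤ) + 1) - ((c.2.2 : ℤ) + 1)) = (s, t)).card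
      = d - t.natAbs := by
  have h : ∀ c : Fin d × Fin d × Fin d,
      (((c.1 : ℤ) + 1, ((c.2.1 : ℤ) + 1) - ((c.2.2 : ℤ) + 1)) = (s, t))
        ↔ (((c.2.1 : ℤ) - (c.2.2 : ℤ) = t) ∧ ((c.1 : ℤ) + 1 = s)) := by
    intro c
    rw [Prod.mk.injEq]
    constructor <;> rintro ⟨h1, h2⟩ <;> exact ⟨by omega, by omega⟩
  simp only [h]
  rw [split_count' d (fun j l => (j : ℤ) - (l : ℤ) = t) (fun i => (i : ℤ) + 1 = s),
    count_diff d t ht, count_snd d s h1 h2, mul_one]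

lemma absum (G : ℕ → ℝ) : ∀ d : ℕ, 1 ≤ d →
    ∑ s ∈ Finset.Icc (1 - (d : ℤ)) ((d : ℤ) - 1), G s.natAbs
      = G 0 + 2 * ∑ σ ∈ Finset.Icc 1 (d - 1), G σ := by
  intro d
  induction d with
  | zero => omega
  | succ n ih =>
    intro _
    rcases Nat.eq_zero_or_pos n with rfl | hn
    · norm_num
    · have h1 : Finset.Icc (1 - ((n + 1 : ℕ) : ℤ)) (((n + 1 : ℕ) : ℤ) - 1)
          = insert (-(n : ℤ)) (insert (n : ℤ) (Finset.Icc (1 - (n : ℤ)) ((n : ℤ) - 1))) := by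
        ext x
        simp only [Finset.mem_Icc, Finset.mem_insert]
        push_cast
        omega
      have h2 : Finset.Icc 1 (n + 1 - 1) = insert n (Finset.Icc 1 (n - 1)) := by
        ext x
        simp only [Finset.mem_Icc, Finset.mem_insert]
        omega
      rw [h1, h2, Finset.sum_insert, Finset.sum_insert, Finset.sum_insert, ih hn]
      · simp only [Int.natAbs_neg, Int.natAbs_natCast]
        ring
      · simp only [Finset.mem_Icc]; omega
      · simp only [Finset.mem_Icc]; omega
      · simp only [Finset.mem_insert, Finset.mem_Icc]
        push_cast
        omega

lemma core (d k : ℕ) (hd : 1 ≤ d) :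
    ∑ s ∈ Finset.Icc (1 - (d : ℤ)) ((d : ℤ) - 1), (((d ^ 3 - (d - s.natAbs) : ℕ) : ℝ)) ^ k
      = ((d : ℝ) ^ 3) ^ k * ((1 - 1 / (d : ℝ) ^ 2) ^ k
          + 2 * ∑ s ∈ Finset.Icc 1 (d - 1), (1 - (s : ℝ) / (d : ℝ) ^ 3) ^ k) := by
  have hd0 : (d : ℝ) ≠ 0 := by
    have : (0:ℝ) < d := by exact_mod_cast hd
    linarith
  have hdd : d ≤ d ^ 3 := Nat.le_self_pow (by norm_num) d
  rw [absum (fun m => (((d ^ 3 - (d - m) : ℕ) : ℝ)) ^ k) d hd]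
  have hG0 : (((d ^ 3 - (d - 0) : ℕ) : ℝ)) ^ k = ((d : ℝ) ^ 3) ^ k * (1 - 1 / (d : ℝ) ^ 2) ^ k := by
    rw [← mul_pow]
    congr 1
    rw [Nat.sub_zero, Nat.cast_sub hdd]
    push_cast
    field_simp
  have hsum : ∑ σ ∈ Finset.Icc 1 (d - 1), (((d ^ 3 - (d - σ) : ℕ) : ℝ)) ^ k
      = ((d : ℝ) ^ 3) ^ k * ∑ s ∈ Finset.Icc 1 (d - 1), (1 - (s : ℝ) / (d : ℝ) ^ 3) ^ k := by
    rw [Finset.mul_sum]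
    refine Finset.sum_nbij' (fun σ => d - σ) (fun σ => d - σ) ?_ ?_ ?_ ?_ ?_
    · intro a ha; simp only [Finset.mem_Icc] at *; omega
    · intro a ha; simp only [Finset.mem_Icc] at *; omega
    · intro a ha; simp only [Finset.mem_Icc] at ha; show d - (d - a) = a; omega
    · intro a ha; simp only [Finset.mem_Icc] at ha; show d - (d - a) = a; omega
    · intro σ hσ
      simp only [Finset.mem_Icc] at hσ
      show (((d ^ 3 - (d - σ) : ℕ) : ℝ)) ^ k
        = ((d : ℝ) ^ 3) ^ k * (1 - ((d - σ : ℕ) : ℝ) / (d : ℝ) ^ 3) ^ k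
      rw [← mul_pow]
      congr 1
      rw [Nat.cast_sub (le_trans (Nat.sub_le d σ) hdd), Nat.cast_sub (by omega : σ ≤ d)]
      push_cast
      field_simp
  rw [hG0, hsum]
  ring

lemma cardC (d : ℕ) : (Finset.univ : Finset (Fin d × Fin d × Fin d)).card = d ^ 3 := by
  simp [Finset.card_univ]
  ring

lemma avoid_card {d : ℕ} (π : Fin d × Fin d × Fin d → ℤ × ℤ) (p : ℤ × ℤ) (m : ℕ)
    (h : ((Finset.univ.filter fun c => π c = p).card = m)) :
    ((Finset.univ.filter fun c => π c ≠ p).card = d ^ 3 - m) := by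
  simp only [ne_eq]
  rw [Finset.filter_not, Finset.card_sdiff_of_subset (Finset.filter_subset _ _), cardC, h]

lemma dir12 (d k : ℕ) (hd : 1 ≤ d) (π : Fin d × Fin d × Fin d → ℤ × ℤ)
    (hfib : ∀ s t : ℤ, s.natAbs ≤ d → 1 ≤ t → t ≤ (d : ℤ) →
      ((Finset.univ.filter fun c => π c = (s, t)).card = d - s.natAbs)) :
    ∑ f : Fin k → Fin d × Fin d × Fin d,
      (((Finset.Icc (1 - (d : ℤ)) ((d : ℤ) - 1) ×ˢ Finset.Icc (1 : ℤ) (d : ℤ)).filter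
          fun p => ∀ t : Fin k, π (f t) ≠ p).card : ℝ)
      = ((d : ℝ) ^ 3) ^ k * ((d : ℝ) * ((1 - 1 / (d : ℝ) ^ 2) ^ k
          + 2 * ∑ s ∈ Finset.Icc 1 (d - 1), (1 - (s : ℝ) / (d : ℝ) ^ 3) ^ k)) := by
  rw [expcount]
  have h1 : ∀ p ∈ Finset.Icc (1 - (d : ℤ)) ((d : ℤ) - 1) ×ˢ Finset.Icc (1 : ℤ) (d : ℤ),
      ((Finset.univ.filter fun c => π c ≠ p).card : ℝ) ^ k
        = (((d ^ 3 - (d - p.1.natAbs) : ℕ) : ℝ)) ^ k := by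
    rintro ⟨s, t⟩ hp
    simp only [Finset.mem_product, Finset.mem_Icc] at hp
    rw [avoid_card π (s, t) (d - s.natAbs) (hfib s t (by omega) hp.2.1 hp.2.2)]
  rw [Finset.sum_congr rfl h1, Finset.sum_product]
  have h2 : ∀ s : ℤ, ∑ _t ∈ Finset.Icc (1 : ℤ) (d : ℤ), (((d ^ 3 - (d - s.natAbs) : ℕ) : ℝ)) ^ k
      = (d : ℝ) * (((d ^ 3 - (d - s.natAbs) : ℕ) : ℝ)) ^ k := by
    intro s
    rw [Finset.sum_const, Int.card_Icc, nsmul_eq_mul]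
    congr 1
    have : ((d : ℤ) + 1 - 1).toNat = d := by omega
    rw [this]
  rw [Finset.sum_congr rfl fun s _ => h2 s, ← Finset.mul_sum, core d k hd]
  ring

lemma dir34 (d k : ℕ) (hd : 1 ≤ d) (π : Fin d × Fin d × Fin d → ℤ × ℤ)
    (hfib : ∀ s t : ℤ, 1 ≤ s → s ≤ (d : ℤ) → t.natAbs ≤ d →
      ((Finset.univ.filter fun c => π c = (s, t)).card = d - t.natAbs)) :
    ∑ f : Fin k → Fin d × Fin d × Fin d,
      (((Finset.Icc (1 : ℤ) (d : ℤ) ×ˢ Finset.Icc (1 - (d : ℤ)) ((d : ℤ) - 1)).filter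
          fun p => ∀ t : Fin k, π (f t) ≠ p).card : ℝ)
      = ((d : ℝ) ^ 3) ^ k * ((d : ℝ) * ((1 - 1 / (d : ℝ) ^ 2) ^ k
          + 2 * ∑ s ∈ Finset.Icc 1 (d - 1), (1 - (s : ℝ) / (d : ℝ) ^ 3) ^ k)) := by
  rw [expcount]
  have h1 : ∀ p ∈ Finset.Icc (1 : ℤ) (d : ℤ) ×ˢ Finset.Icc (1 - (d : ℤ)) ((d : ℤ) - 1),
      ((Finset.univ.filter fun c => π c ≠ p).card : ℝ) ^ k
        = (((d ^ 3 - (d - p.2.natAbs) : ℕ) : ℝ)) ^ k := by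
    rintro ⟨s, t⟩ hp
    simp only [Finset.mem_product, Finset.mem_Icc] at hp
    rw [avoid_card π (s, t) (d - t.natAbs) (hfib s t hp.1.1 hp.1.2 (by omega))]
  rw [Finset.sum_congr rfl h1, Finset.sum_product]
  have h2 : ∀ s : ℤ, s ∈ Finset.Icc (1 : ℤ) (d : ℤ) →
      ∑ t ∈ Finset.Icc (1 - (d : ℤ)) ((d : ℤ) - 1), (((d ^ 3 - (d - t.natAbs) : ℕ) : ℝ)) ^ k
      = ((d : ℝ) ^ 3) ^ k * ((1 - 1 / (d : ℝ) ^ 2) ^ k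
          + 2 * ∑ s ∈ Finset.Icc 1 (d - 1), (1 - (s : ℝ) / (d : ℝ) ^ 3) ^ k) :=
    fun s _ => core d k hd
  rw [Finset.sum_congr rfl h2, Finset.sum_const, Int.card_Icc, nsmul_eq_mul]
  have : ((d : ℤ) + 1 - 1).toNat = d := by omega
  rw [this]
  ring

lemma exists_card {k : ℕ} {C : Type*} [Fintype C] [DecidableEq C] (π : C → ℤ × ℤ)
    (P : Finset (ℤ × ℤ)) (f : Fin k → C) :
    (P.filter fun p => ∃ t : Fin k, π (f t) = p).card
      = P.card - (P.filter fun p => ∀ t : Fin k, π (f t) ≠ p).card := by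
  have h : P.filter (fun p => ∃ t : Fin k, π (f t) = p)
      = P \ P.filter (fun p => ∀ t : Fin k, π (f t) ≠ p) := by
    ext p
    simp only [Finset.mem_filter, Finset.mem_sdiff, not_and, not_forall, not_not]
    tauto
  rw [h, Finset.card_sdiff_of_subset (Finset.filter_subset _ _)]

/-- For the 4-camera cube geometry and a random seeding with
sparsity parameter k, the expected number of zero measurements is
N_R^0 = 4d((1 − 1/d²)^k + 2 Σ_{s=1}^{d−1} (1 − s/d³)^k), and the expected number
of nonzero measurements is N_R = |R| − N_R^0 = 4d(2d − 1) − N_R^0. -/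
theorem stmt_14 (d k : ℕ) (hd : 1 ≤ d)
    (π₁ π₂ π₃ π₄ : Fin d × Fin d × Fin d → ℤ × ℤ)
    -- cell (i,j,l) ∈ [d]³ is encoded by c with i = c.1+1, j = c.2.1+1, l = c.2.2+1
    (hπ₁ : ∀ c, π₁ c = (((c.1 : ℤ) + 1) + ((c.2.2 : ℤ) + 1) - 1 - d, (c.2.1 : ℤ) + 1))
    (hπ₂ : ∀ c, π₂ c = (((c.1 : ℤ) + 1) - ((c.2.2 : ℤ) + 1), (c.2.1 : ℤ) + 1))
    (hπ₃ : ∀ c, π₃ c = ((c.1 : ℤ) + 1, ((c.2.1 : ℤ) + 1) + ((c.2.2 : ℤ) + 1) - 1 - d))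
    (hπ₄ : ∀ c, π₄ c = ((c.1 : ℤ) + 1, ((c.2.1 : ℤ) + 1) - ((c.2.2 : ℤ) + 1)))
    -- the pixel domains of directions 1,2 and of directions 3,4
    (P₁₂ P₃₄ : Finset (ℤ × ℤ))
    (hP₁₂ : P₁₂ = Finset.Icc (1 - (d : ℤ)) ((d : ℤ) - 1) ×ˢ Finset.Icc (1 : ℤ) (d : ℤ))
    (hP₃₄ : P₃₄ = Finset.Icc (1 : ℤ) (d : ℤ) ×ˢ Finset.Icc (1 - (d : ℤ)) ((d : ℤ) - 1)) :
    -- expected number of zero measurements N_R^0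
    (∑ f : Fin k → Fin d × Fin d × Fin d,
        (((P₁₂.filter fun p => ∀ t : Fin k, π₁ (f t) ≠ p).card
          + (P₁₂.filter fun p => ∀ t : Fin k, π₂ (f t) ≠ p).card
          + (P₃₄.filter fun p => ∀ t : Fin k, π₃ (f t) ≠ p).card
          + (P₃₄.filter fun p => ∀ t : Fin k, π₄ (f t) ≠ p).card : ℕ) : ℝ))
      / ((d : ℝ) ^ 3) ^ k
      = 4 * (d : ℝ) * ((1 - 1 / (d : ℝ) ^ 2) ^ k
          + 2 * ∑ s ∈ Finset.Icc 1 (d - 1), (1 - (s : ℝ) / (d : ℝ) ^ 3) ^ k) ∧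
    -- expected number of nonzero measurements: N_R = 4d(2d−1) − N_R^0
    (∑ f : Fin k → Fin d × Fin d × Fin d,
        (((P₁₂.filter fun p => ∃ t : Fin k, π₁ (f t) = p).card
          + (P₁₂.filter fun p => ∃ t : Fin k, π₂ (f t) = p).card
          + (P₃₄.filter fun p => ∃ t : Fin k, π₃ (f t) = p).card
          + (P₃₄.filter fun p => ∃ t : Fin k, π₄ (f t) = p).card : ℕ) : ℝ))
      / ((d : ℝ) ^ 3) ^ k
      = 4 * (d : ℝ) * (2 * (d : ℝ) - 1)
        - 4 * (d : ℝ) * ((1 - 1 / (d : ℝ) ^ 2) ^ k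
          + 2 * ∑ s ∈ Finset.Icc 1 (d - 1), (1 - (s : ℝ) / (d : ℝ) ^ 3) ^ k) := by
  have hπ₁' : π₁ = fun c => (((c.1 : ℤ) + 1) + ((c.2.2 : ℤ) + 1) - 1 - d, (c.2.1 : ℤ) + 1) :=
    funext hπ₁
  have hπ₂' : π₂ = fun c => (((c.1 : ℤ) + 1) - ((c.2.2 : ℤ) + 1), (c.2.1 : ℤ) + 1) := funext hπ₂
  have hπ₃' : π₃ = fun c => ((c.1 : ℤ) + 1, ((c.2.1 : ℤ) + 1) + ((c.2.2 : ℤ) + 1) - 1 - d) :=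
    funext hπ₃
  have hπ₄' : π₄ = fun c => ((c.1 : ℤ) + 1, ((c.2.1 : ℤ) + 1) - ((c.2.2 : ℤ) + 1)) := funext hπ₄
  subst hπ₁' hπ₂' hπ₃' hπ₄' hP₁₂ hP₃₄
  have hdR : (0:ℝ) < (d:ℝ) := by exact_mod_cast hd
  have hX : ((d : ℝ) ^ 3) ^ k ≠ 0 := by positivity
  have E1 := dir12 d k hd _ (fun s t hs h1 h2 => fib1 d s t hs h1 h2)
  have E2 := dir12 d k hd _ (fun s t hs h1 h2 => fib2 d s t hs h1 h2)
  have E3 := dir34 d k hd _ (fun s t h1 h2 ht => fib3 d s t h1 h2 ht)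
  have E4 := dir34 d k hd _ (fun s t h1 h2 ht => fib4 d s t h1 h2 ht)
  have hnum : (∑ f : Fin k → Fin d × Fin d × Fin d,
        ((((Finset.Icc (1 - (d : ℤ)) ((d : ℤ) - 1) ×ˢ Finset.Icc (1 : ℤ) (d : ℤ)).filter
            fun p => ∀ t : Fin k, (fun c : Fin d × Fin d × Fin d =>
              ((((c.1 : ℤ) + 1) + ((c.2.2 : ℤ) + 1) - 1 - d, (c.2.1 : ℤ) + 1) : ℤ × ℤ)) (f t) ≠ p).card
          + ((Finset.Icc (1 - (d : ℤ)) ((d : ℤ) - 1) ×ˢ Finset.Icc (1 : ℤ) (d : ℤ)).filter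
            fun p => ∀ t : Fin k, (fun c : Fin d × Fin d × Fin d =>
              ((((c.1 : ℤ) + 1) - ((c.2.2 : ℤ) + 1), (c.2.1 : ℤ) + 1) : ℤ × ℤ)) (f t) ≠ p).card
          + ((Finset.Icc (1 : ℤ) (d : ℤ) ×ˢ Finset.Icc (1 - (d : ℤ)) ((d : ℤ) - 1)).filter
            fun p => ∀ t : Fin k, (fun c : Fin d × Fin d × Fin d =>
              (((c.1 : ℤ) + 1, ((c.2.1 : ℤ) + 1) + ((c.2.2 : ℤ) + 1) - 1 - d) : ℤ × ℤ)) (f t) ≠ p).card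
          + ((Finset.Icc (1 : ℤ) (d : ℤ) ×ˢ Finset.Icc (1 - (d : ℤ)) ((d : ℤ) - 1)).filter
            fun p => ∀ t : Fin k, (fun c : Fin d × Fin d × Fin d =>
              (((c.1 : ℤ) + 1, ((c.2.1 : ℤ) + 1) - ((c.2.2 : ℤ) + 1)) : ℤ × ℤ)) (f t) ≠ p).card : ℕ) : ℝ))
      = ((d : ℝ) ^ 3) ^ k * (4 * (d : ℝ) * ((1 - 1 / (d : ℝ) ^ 2) ^ k
          + 2 * ∑ s ∈ Finset.Icc 1 (d - 1), (1 - (s : ℝ) / (d : ℝ) ^ 3) ^ k)) := by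
    push_cast
    rw [Finset.sum_add_distrib, Finset.sum_add_distrib, Finset.sum_add_distrib, E1, E2, E3, E4]
    ring
  constructor
  · rw [hnum, mul_comm, mul_div_assoc, div_self hX, mul_one]
  · have hc12 : (((Finset.Icc (1 - (d : ℤ)) ((d : ℤ) - 1) ×ˢ Finset.Icc (1 : ℤ) (d : ℤ)).card : ℕ) : ℝ)
        = (2 * (d : ℝ) - 1) * d := by
      rw [Finset.card_product, Int.card_Icc, Int.card_Icc]
      have h1 : ((d : ℤ) - 1 + 1 - (1 - d)).toNat = 2 * d - 1 := by omega
      have h2 : ((d : ℤ) + 1 - 1).toNat = d := by omega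
      rw [h1, h2, Nat.cast_mul, Nat.cast_sub (by omega : 1 ≤ 2 * d)]
      push_cast
      ring
    have hc34 : (((Finset.Icc (1 : ℤ) (d : ℤ) ×ˢ Finset.Icc (1 - (d : ℤ)) ((d : ℤ) - 1)).card : ℕ) : ℝ)
        = (d : ℝ) * (2 * (d : ℝ) - 1) := by
      rw [Finset.card_product, Int.card_Icc, Int.card_Icc]
      have h1 : ((d : ℤ) - 1 + 1 - (1 - d)).toNat = 2 * d - 1 := by omega
      have h2 : ((d : ℤ) + 1 - 1).toNat = d := by omega
      rw [h1, h2, Nat.cast_mul, Nat.cast_sub (by omega : 1 ≤ 2 * d)]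
      push_cast
      ring
    have hzero' := hnum
    push_cast at hzero'
    have key : ∀ f : Fin k → Fin d × Fin d × Fin d,
        ((((Finset.Icc (1 - (d : ℤ)) ((d : ℤ) - 1) ×ˢ Finset.Icc (1 : ℤ) (d : ℤ)).filter
            fun p => ∃ t : Fin k, (fun c : Fin d × Fin d × Fin d =>
              ((((c.1 : ℤ) + 1) + ((c.2.2 : ℤ) + 1) - 1 - d, (c.2.1 : ℤ) + 1) : ℤ × ℤ)) (f t) = p).card
          + ((Finset.Icc (1 - (d : ℤ)) ((d : ℤ) - 1) ×ˢ Finset.Icc (1 : ℤ) (d : ℤ)).filter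
            fun p => ∃ t : Fin k, (fun c : Fin d × Fin d × Fin d =>
              ((((c.1 : ℤ) + 1) - ((c.2.2 : ℤ) + 1), (c.2.1 : ℤ) + 1) : ℤ × ℤ)) (f t) = p).card
          + ((Finset.Icc (1 : ℤ) (d : ℤ) ×ˢ Finset.Icc (1 - (d : ℤ)) ((d : ℤ) - 1)).filter
            fun p => ∃ t : Fin k, (fun c : Fin d × Fin d × Fin d =>
              (((c.1 : ℤ) + 1, ((c.2.1 : ℤ) + 1) + ((c.2.2 : ℤ) + 1) - 1 - d) : ℤ × ℤ)) (f t) = p).card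
          + ((Finset.Icc (1 : ℤ) (d : ℤ) ×ˢ Finset.Icc (1 - (d : ℤ)) ((d : ℤ) - 1)).filter
            fun p => ∃ t : Fin k, (fun c : Fin d × Fin d × Fin d =>
              (((c.1 : ℤ) + 1, ((c.2.1 : ℤ) + 1) - ((c.2.2 : ℤ) + 1)) : ℤ × ℤ)) (f t) = p).card : ℕ) : ℝ)
        = (2 * (((Finset.Icc (1 - (d : ℤ)) ((d : ℤ) - 1) ×ˢ Finset.Icc (1 : ℤ) (d : ℤ)).card : ℕ) : ℝ)
            + 2 * (((Finset.Icc (1 : ℤ) (d : ℤ) ×ˢ Finset.Icc (1 - (d : ℤ)) ((d : ℤ) - 1)).card : ℕ) : ℝ))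
          - (((((Finset.Icc (1 - (d : ℤ)) ((d : ℤ) - 1) ×ˢ Finset.Icc (1 : ℤ) (d : ℤ)).filter
            fun p => ∀ t : Fin k, (fun c : Fin d × Fin d × Fin d =>
              ((((c.1 : ℤ) + 1) + ((c.2.2 : ℤ) + 1) - 1 - d, (c.2.1 : ℤ) + 1) : ℤ × ℤ)) (f t) ≠ p).card : ℕ) : ℝ)
          + ((((Finset.Icc (1 - (d : ℤ)) ((d : ℤ) - 1) ×ˢ Finset.Icc (1 : ℤ) (d : ℤ)).filter
            fun p => ∀ t : Fin k, (fun c : Fin d × Fin d × Fin d =>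
              ((((c.1 : ℤ) + 1) - ((c.2.2 : ℤ) + 1), (c.2.1 : ℤ) + 1) : ℤ × ℤ)) (f t) ≠ p).card : ℕ) : ℝ)
          + ((((Finset.Icc (1 : ℤ) (d : ℤ) ×ˢ Finset.Icc (1 - (d : ℤ)) ((d : ℤ) - 1)).filter
            fun p => ∀ t : Fin k, (fun c : Fin d × Fin d × Fin d =>
              (((c.1 : ℤ) + 1, ((c.2.1 : ℤ) + 1) + ((c.2.2 : ℤ) + 1) - 1 - d) : ℤ × ℤ)) (f t) ≠ p).card : ℕ) : ℝ)
          + ((((Finset.Icc (1 : ℤ) (d : ℤ) ×ˢ Finset.Icc (1 - (d : ℤ)) ((d : ℤ) - 1)).filter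
            fun p => ∀ t : Fin k, (fun c : Fin d × Fin d × Fin d =>
              (((c.1 : ℤ) + 1, ((c.2.1 : ℤ) + 1) - ((c.2.2 : ℤ) + 1)) : ℤ × ℤ)) (f t) ≠ p).card : ℕ) : ℝ)) := by
      intro f
      have e1 := exists_card (fun c : Fin d × Fin d × Fin d =>
        (((((c.1 : ℤ) + 1) + ((c.2.2 : ℤ) + 1) - 1 - d, (c.2.1 : ℤ) + 1)) : ℤ × ℤ))
        (Finset.Icc (1 - (d : ℤ)) ((d : ℤ) - 1) ×ˢ Finset.Icc (1 : ℤ) (d : ℤ)) f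
      have e2 := exists_card (fun c : Fin d × Fin d × Fin d =>
        (((((c.1 : ℤ) + 1) - ((c.2.2 : ℤ) + 1), (c.2.1 : ℤ) + 1)) : ℤ × ℤ))
        (Finset.Icc (1 - (d : ℤ)) ((d : ℤ) - 1) ×ˢ Finset.Icc (1 : ℤ) (d : ℤ)) f
      have e3 := exists_card (fun c : Fin d × Fin d × Fin d =>
        ((((c.1 : ℤ) + 1, ((c.2.1 : ℤ) + 1) + ((c.2.2 : ℤ) + 1) - 1 - d)) : ℤ × ℤ))
        (Finset.Icc (1 : ℤ) (d : ℤ) ×ˢ Finset.Icc (1 - (d : ℤ)) ((d : ℤ) - 1)) f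
      have e4 := exists_card (fun c : Fin d × Fin d × Fin d =>
        ((((c.1 : ℤ) + 1, ((c.2.1 : ℤ) + 1) - ((c.2.2 : ℤ) + 1))) : ℤ × ℤ))
        (Finset.Icc (1 : ℤ) (d : ℤ) ×ˢ Finset.Icc (1 - (d : ℤ)) ((d : ℤ) - 1)) f
      rw [e1, e2, e3, e4]
      rw [Nat.cast_add, Nat.cast_add, Nat.cast_add,
        Nat.cast_sub (Finset.card_filter_le _ _), Nat.cast_sub (Finset.card_filter_le _ _),
        Nat.cast_sub (Finset.card_filter_le _ _), Nat.cast_sub (Finset.card_filter_le _ _)]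
      ring
    rw [Finset.sum_congr rfl fun f _ => key f, Finset.sum_sub_distrib, hzero',
      Finset.sum_const, Finset.card_univ, nsmul_eq_mul]
    have hcard : ((Fintype.card (Fin k → Fin d × Fin d × Fin d) : ℕ) : ℝ) = ((d : ℝ) ^ 3) ^ k := by
      simp only [Fintype.card_fun, Fintype.card_prod, Fintype.card_fin]
      push_cast
      ring
    rw [hcard, hc12, hc34, div_eq_iff hX]
    ring
end

section
/- For the 4-camera cube geometry with problem size d ≥ 1 and a random seeding with sparsity parameter k, the expected number N_C of cells c ∈ {1,…,d}³ such that none of the four pixels π₁(c), π₂(c), π₃(c), π₄(c) is a zero measurement equals N_C = d³ − N_C^1 + N_C^2 − N_C^3 + N_C^4, where N_C^1 = 4d( d (1 − 1/d²)^k + 2 Σ_{s=1}^{d−1} s (1 − s/d³)^k ), N_C^2 = 2d Σ_{i,l∈[d]} R(l+i−1−d, i−l) + 4 Σ_{i,j,l∈[d]} R(l−i, l−j), N_C^3 = 2 Σ_{i,j,l∈[d]} ( R(l+i−1−d, l−i, l−j) + R(l−i, l−j, l+j−1−d) ), and N_C^4 = Σ_{i,j,l∈[d]} R(l+i−1−d,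 l−i, l+j−1−d, l−j). -/
open Finset

lemma avoid_count {α : Type*} [Fintype α] [DecidableEq α] (k : ℕ) (A : Finset α) :
    (Finset.univ.filter (fun f : Fin k → α => ∀ t, f t ∉ A)).card
      = (Fintype.card α - A.card) ^ k := by
  have h : Finset.univ.filter (fun f : Fin k → α => ∀ t, f t ∉ A)
      = Fintype.piFinset (fun _ : Fin k => Aᶜ) := by
    ext f; simp [Fintype.mem_piFinset]
  rw [h, Fintype.card_piFinset]
  simp [Finset.card_compl]

lemma ie4 (P₁ P₂ P₃ P₄ : Prop) [Decidable P₁] [Decidable P₂] [Decidable P₃] [Decidable P₄] :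
    (if ¬P₁ ∧ ¬P₂ ∧ ¬P₃ ∧ ¬P₄ then (1:ℝ) else 0)
      = 1 - (if P₁ then (1:ℝ) else 0) - (if P₂ then (1:ℝ) else 0)
          - (if P₃ then (1:ℝ) else 0) - (if P₄ then (1:ℝ) else 0)
        + (if P₁ ∧ P₂ then (1:ℝ) else 0) + (if P₁ ∧ P₃ then (1:ℝ) else 0)
        + (if P₁ ∧ P₄ then (1:ℝ) else 0) + (if P₂ ∧ P₃ then (1:ℝ) else 0)
        + (if P₂ ∧ P₄ then (1:ℝ) else 0) + (if P₃ ∧ P₄ then (1:ℝ) else 0)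
        - (if P₁ ∧ P₂ ∧ P₃ then (1:ℝ) else 0) - (if P₁ ∧ P₂ ∧ P₄ then (1:ℝ) else 0)
        - (if P₁ ∧ P₃ ∧ P₄ then (1:ℝ) else 0) - (if P₂ ∧ P₃ ∧ P₄ then (1:ℝ) else 0)
        + (if P₁ ∧ P₂ ∧ P₃ ∧ P₄ then (1:ℝ) else 0) := by
  by_cases h1 : P₁ <;> by_cases h2 : P₂ <;> by_cases h3 : P₃ <;> by_cases h4 : P₄ <;>
    simp [h1, h2, h3, h4]

lemma cardAdd (d : ℕ) (m : ℤ) (h0 : 0 ≤ m) (h1 : m ≤ 2*(d:ℤ) - 2) :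
    ((Finset.univ.filter (fun p : Fin d × Fin d => (p.1:ℤ) + (p.2:ℤ) = m)).card : ℤ)
      = (d:ℤ) - |m - ((d:ℤ)-1)| := by
  have hb : ∀ p : Fin d × Fin d, p ∈ Finset.univ.filter
      (fun p : Fin d × Fin d => (p.1:ℤ) + (p.2:ℤ) = m) →
      (p.1:ℤ) ∈ Finset.Icc (max 0 (m - ((d:ℤ)-1))) (min m ((d:ℤ)-1)) := by
    rintro ⟨a, b⟩ hp
    simp only [mem_filter, mem_univ, true_and] at hp
    dsimp only at hp ⊢
    have ha := a.isLt; have hbb := b.isLt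
    simp only [mem_Icc, max_le_iff, le_min_iff]
    omega
  have hcard : (Finset.univ.filter (fun p : Fin d × Fin d => (p.1:ℤ) + (p.2:ℤ) = m)).card
      = (Finset.Icc (max 0 (m - ((d:ℤ)-1))) (min m ((d:ℤ)-1))).card := by
    apply Finset.card_bij (fun p _ => (p.1 : ℤ)) hb
    · rintro ⟨a, b⟩ hp ⟨a', b'⟩ hp' h
      simp only [mem_filter, mem_univ, true_and] at hp hp'
      dsimp only at hp hp' h
      have h1 : a = a' := by apply Fin.ext; omega
      subst h1
      have h2 : b = b' := by apply Fin.ext; omega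
      simp [h2]
    · intro n hn
      simp only [mem_Icc, max_le_iff, le_min_iff] at hn
      have hd : 1 ≤ d := by omega
      refine ⟨⟨⟨n.toNat, by omega⟩, ⟨(m - n).toNat, by omega⟩⟩, ?_, ?_⟩
      · simp only [mem_filter, mem_univ, true_and]; simp; omega
      · simp; omega
  rw [hcard, Int.card_Icc]
  rcases abs_cases (m - ((d:ℤ)-1)) with ⟨he, _⟩ | ⟨he, _⟩ <;> rw [he] <;> omega

lemma cardSub (d : ℕ) (m : ℤ) (h : |m| ≤ (d:ℤ) - 1) :
    ((Finset.univ.filter (fun p : Fin d × Fin d => (p.1:ℤ) - (p.2:ℤ) = m)).card : ℤ)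
      = (d:ℤ) - |m| := by
  have habs := abs_le.mp h
  have hb : ∀ p : Fin d × Fin d, p ∈ Finset.univ.filter
      (fun p : Fin d × Fin d => (p.1:ℤ) - (p.2:ℤ) = m) →
      (p.1:ℤ) ∈ Finset.Icc (max 0 m) (min ((d:ℤ)-1) (m + (d:ℤ) - 1)) := by
    rintro ⟨a, b⟩ hp
    simp only [mem_filter, mem_univ, true_and] at hp
    dsimp only at hp ⊢
    have ha := a.isLt; have hbb := b.isLt
    simp only [mem_Icc, max_le_iff, le_min_iff]
    omega
  have hcard : (Finset.univ.filter (fun p : Fin d × Fin d => (p.1:ℤ) - (p.2:ℤ) = m)).card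
      = (Finset.Icc (max 0 m) (min ((d:ℤ)-1) (m + (d:ℤ) - 1))).card := by
    apply Finset.card_bij (fun p _ => (p.1 : ℤ)) hb
    · rintro ⟨a, b⟩ hp ⟨a', b'⟩ hp' hh
      simp only [mem_filter, mem_univ, true_and] at hp hp'
      dsimp only at hp hp' hh
      have h1 : a = a' := by apply Fin.ext; omega
      subst h1
      have h2 : b = b' := by apply Fin.ext; omega
      simp [h2]
    · intro n hn
      simp only [mem_Icc, max_le_iff, le_min_iff] at hn
      have hd : 1 ≤ d := by omega
      refine ⟨⟨⟨n.toNat, by omega⟩, ⟨(n - m).toNat, by omega⟩⟩, ?_, ?_⟩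
      · simp only [mem_filter, mem_univ, true_and]; simp; omega
      · simp; omega
  rw [hcard, Int.card_Icc]
  rcases abs_cases m with ⟨he, _⟩ | ⟨he, _⟩ <;> rw [he] <;> omega

lemma unionCard2 {α : Type*} [DecidableEq α] {A B : Finset α} {c : α}
    (h : A ∩ B = {c}) : ((A ∪ B).card : ℤ) = A.card + B.card - 1 := by
  have h2 := Finset.card_union_add_card_inter A B
  rw [h] at h2
  simp only [Finset.card_singleton] at h2
  push_cast
  omega

lemma unionCard3 {α : Type*} [DecidableEq α] {A B E : Finset α} {c : α}
    (hAB : A ∩ B = {c}) (hAE : A ∩ E = {c}) (hBE : B ∩ E = {c}) :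
    ((A ∪ B ∪ E).card : ℤ) = A.card + B.card + E.card - 2 := by
  have h1 : (A ∪ B) ∩ E = {c} := by
    rw [Finset.union_inter_distrib_right, hAE, hBE]; simp
  have h2 := unionCard2 h1
  rw [h2, unionCard2 hAB]; ring

lemma unionCard4 {α : Type*} [DecidableEq α] {A B E G : Finset α} {c : α}
    (hAB : A ∩ B = {c}) (hAE : A ∩ E = {c}) (hAG : A ∩ G = {c})
    (hBE : B ∩ E = {c}) (hBG : B ∩ G = {c}) (hEG : E ∩ G = {c}) :
    ((A ∪ B ∪ E ∪ G).card : ℤ) = A.card + B.card + E.card + G.card - 3 := by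
  have h1 : (A ∪ B ∪ E) ∩ G = {c} := by
    rw [Finset.union_inter_distrib_right, Finset.union_inter_distrib_right,
      hAG, hBG, hEG]; simp
  have h2 := unionCard2 h1
  rw [h2, unionCard3 hAB hAE hBE]; ring

lemma cardFix2 (d : ℕ) (P : Fin d → Fin d → Prop) [∀ a b, Decidable (P a b)] (j : Fin d) :
    (Finset.univ.filter fun c : Fin d × Fin d × Fin d => P c.1 c.2.2 ∧ c.2.1 = j).card
      = (Finset.univ.filter fun p : Fin d × Fin d => P p.1 p.2).card := by
  apply Finset.card_bij (fun c _ => (c.1, c.2.2))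
  · rintro ⟨a, b, e⟩ hc
    simp only [mem_filter, mem_univ, true_and] at hc ⊢
    exact hc.1
  · rintro ⟨a, b, e⟩ hc ⟨a', b', e'⟩ hc' h
    simp only [mem_filter, mem_univ, true_and] at hc hc'
    simp only [Prod.mk.injEq] at h ⊢
    exact ⟨h.1, hc.2.trans hc'.2.symm, h.2⟩
  · rintro ⟨a, e⟩ hp
    simp only [mem_filter, mem_univ, true_and] at hp
    exact ⟨(a, j, e), by simp [hp], rfl⟩

lemma cardFix1 (d : ℕ) (P : Fin d → Fin d → Prop) [∀ a b, Decidable (P a b)] (i : Fin d) :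
    (Finset.univ.filter fun c : Fin d × Fin d × Fin d => P c.2.1 c.2.2 ∧ c.1 = i).card
      = (Finset.univ.filter fun p : Fin d × Fin d => P p.1 p.2).card := by
  apply Finset.card_bij (fun c _ => (c.2.1, c.2.2))
  · rintro ⟨a, b, e⟩ hc
    simp only [mem_filter, mem_univ, true_and] at hc ⊢
    exact hc.1
  · rintro ⟨a, b, e⟩ hc ⟨a', b', e'⟩ hc' h
    simp only [mem_filter, mem_univ, true_and] at hc hc'
    simp only [Prod.mk.injEq] at h ⊢
    exact ⟨hc.2.trans hc'.2.symm, h.1, h.2⟩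
  · rintro ⟨a, e⟩ hp
    simp only [mem_filter, mem_univ, true_and] at hp
    exact ⟨(i, a, e), by simp [hp], rfl⟩

lemma sum_Icc_fin (d : ℕ) (g : ℤ → ℝ) :
    ∑ I ∈ Finset.Icc (1:ℤ) (d:ℤ), g I = ∑ x : Fin d, g ((x:ℤ)+1) := by
  refine Finset.sum_bij' (fun (I : ℤ) (hI : I ∈ Finset.Icc (1:ℤ) (d:ℤ)) =>
      (⟨(I-1).toNat, by simp at hI; omega⟩ : Fin d))
    (fun (x : Fin d) _ => (x:ℤ)+1) ?_ ?_ ?_ ?_ ?_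
  · intros; simp
  · intro x _; have := x.isLt; simp
  · intro I hI; simp only [Finset.mem_Icc] at hI; dsimp only; simp; omega
  · intro x _; have := x.isLt; apply Fin.ext; dsimp only; simp
  · intro I hI; simp only [Finset.mem_Icc] at hI; dsimp only; congr 1; simp; omega

lemma sum_fin_rev (d : ℕ) (g : Fin d → ℝ) :
    ∑ x : Fin d, g x = ∑ x : Fin d, g x.rev := by
  exact (Fin.rev_involutive.bijective.sum_comp g).symm

lemma sum_IccZ_IccN (d : ℕ) (g : ℤ → ℝ) :
    ∑ s ∈ Finset.Icc (1:ℤ) ((d:ℤ)-1), g s = ∑ s ∈ Finset.Icc (1:ℕ) (d-1), g (s:ℤ) := by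
  refine Finset.sum_bij' (fun (s : ℤ) _ => s.toNat) (fun (s : ℕ) _ => (s:ℤ)) ?_ ?_ ?_ ?_ ?_
  · intro s hs; simp only [Finset.mem_Icc] at hs; simp only [Finset.mem_Icc]; omega
  · intro s hs; simp only [Finset.mem_Icc] at hs; simp only [Finset.mem_Icc]; omega
  · intro s hs; simp only [Finset.mem_Icc] at hs; omega
  · intro s hs; simp
  · intro s hs; simp only [Finset.mem_Icc] at hs; congr 1; omega

lemma diag_sum (d : ℕ) (hd : 1 ≤ d) (F : ℤ → ℝ) :
    ∑ p : Fin d × Fin d, F ((d:ℤ) - |(p.1:ℤ) + (p.2:ℤ) - ((d:ℤ)-1)|)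
      = (d:ℝ) * F (d:ℤ) + 2 * ∑ s ∈ Finset.Icc (1:ℕ) (d-1), (s:ℝ) * F (s:ℤ) := by
  have hcomp := Finset.sum_comp (s := (Finset.univ : Finset (Fin d × Fin d)))
    (fun m : ℤ => F ((d:ℤ) - |m - ((d:ℤ)-1)|)) (fun p : Fin d × Fin d => (p.1:ℤ) + (p.2:ℤ))
  rw [hcomp]
  have himg : (Finset.univ : Finset (Fin d × Fin d)).image
      (fun p : Fin d × Fin d => (p.1:ℤ) + (p.2:ℤ)) = Finset.Icc (0:ℤ) (2*(d:ℤ)-2) := by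
    ext m
    simp only [Finset.mem_image, Finset.mem_univ, true_and, Finset.mem_Icc]
    constructor
    · rintro ⟨⟨a, b⟩, h⟩
      have := a.isLt; have := b.isLt
      dsimp only at h
      omega
    · intro hm
      by_cases h : m ≤ (d:ℤ) - 1
      · exact ⟨(⟨m.toNat, by omega⟩, ⟨0, by omega⟩), by dsimp only; simp; omega⟩
      · exact ⟨(⟨d-1, by omega⟩, ⟨(m - ((d:ℤ)-1)).toNat, by omega⟩), by dsimp only; simp; omega⟩
  rw [himg]
  have hcoef : ∀ m ∈ Finset.Icc (0:ℤ) (2*(d:ℤ)-2),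
      (Finset.univ.filter (fun p : Fin d × Fin d => (p.1:ℤ) + (p.2:ℤ) = m)).card
          • F ((d:ℤ) - |m - ((d:ℤ)-1)|)
        = (((d:ℤ) - |m - ((d:ℤ)-1)| : ℤ) : ℝ) * F ((d:ℤ) - |m - ((d:ℤ)-1)|) := by
    intro m hm
    simp only [Finset.mem_Icc] at hm
    rw [nsmul_eq_mul, ← cardAdd d m hm.1 hm.2]
    norm_num
  rw [Finset.sum_congr rfl hcoef]
  -- reindex m ↦ m - (d-1)
  have hre : ∑ m ∈ Finset.Icc (0:ℤ) (2*(d:ℤ)-2),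
      (((d:ℤ) - |m - ((d:ℤ)-1)| : ℤ) : ℝ) * F ((d:ℤ) - |m - ((d:ℤ)-1)|)
      = ∑ s ∈ Finset.Icc (-((d:ℤ)-1)) ((d:ℤ)-1),
      (((d:ℤ) - |s| : ℤ) : ℝ) * F ((d:ℤ) - |s|) := by
    refine Finset.sum_bij' (fun m _ => m - ((d:ℤ)-1)) (fun s _ => s + ((d:ℤ)-1))
      ?_ ?_ ?_ ?_ ?_ <;> intro x hx <;> simp only [Finset.mem_Icc] at hx ⊢ <;>
      (try dsimp only) <;> first
      | omega
      | (congr 2 <;> omega)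
  rw [hre]
  have hsplit : Finset.Icc (-((d:ℤ)-1)) ((d:ℤ)-1)
      = Finset.Icc (-((d:ℤ)-1)) (-1) ∪ insert 0 (Finset.Icc (1:ℤ) ((d:ℤ)-1)) := by
    ext s; simp only [Finset.mem_union, Finset.mem_insert, Finset.mem_Icc]; omega
  rw [hsplit, Finset.sum_union (by
    rw [Finset.disjoint_left]
    intro s hs hs'
    simp only [Finset.mem_Icc, Finset.mem_insert] at hs hs'
    omega),
    Finset.sum_insert (by simp)]
  have hneg : ∑ s ∈ Finset.Icc (-((d:ℤ)-1)) (-1),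
      (((d:ℤ) - |s| : ℤ) : ℝ) * F ((d:ℤ) - |s|)
      = ∑ s ∈ Finset.Icc (1:ℤ) ((d:ℤ)-1), (((d:ℤ) - |s| : ℤ) : ℝ) * F ((d:ℤ) - |s|) := by
    refine Finset.sum_bij' (fun s _ => -s) (fun s _ => -s) ?_ ?_ ?_ ?_ ?_ <;>
      intro x hx <;> simp only [Finset.mem_Icc] at hx ⊢ <;> (try dsimp only) <;> first
      | omega
      | (rw [abs_neg])
  rw [hneg]
  have hswap : ∑ s ∈ Finset.Icc (1:ℤ) ((d:ℤ)-1), (((d:ℤ) - |s| : ℤ) : ℝ) * F ((d:ℤ) - |s|)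
      = ∑ s ∈ Finset.Icc (1:ℤ) ((d:ℤ)-1), ((s:ℤ) : ℝ) * F s := by
    have h1 : ∀ s ∈ Finset.Icc (1:ℤ) ((d:ℤ)-1),
        (((d:ℤ) - |s| : ℤ) : ℝ) * F ((d:ℤ) - |s|) = (((d:ℤ) - s : ℤ) : ℝ) * F ((d:ℤ) - s) := by
      intro s hs; simp only [Finset.mem_Icc] at hs
      rw [abs_of_nonneg (by omega)]
    rw [Finset.sum_congr rfl h1]
    refine Finset.sum_bij' (fun s _ => (d:ℤ) - s) (fun s _ => (d:ℤ) - s) ?_ ?_ ?_ ?_ ?_ <;>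
      intro x hx <;> simp only [Finset.mem_Icc] at hx ⊢ <;> (try dsimp only) <;> first
      | omega
      | (congr 2 <;> omega)
  rw [hswap, sum_IccZ_IccN d (fun s => ((s:ℤ):ℝ) * F s)]
  have : |(0:ℤ)| = 0 := abs_zero
  rw [this]
  rw [sub_zero]
  push_cast
  ring

lemma sum_avoid {α : Type*} [Fintype α] [DecidableEq α] (k : ℕ) (A : Finset α) :
    ∑ f : Fin k → α, (if ∀ t, f t ∉ A then (1:ℝ) else 0)
      = (((Fintype.card α - A.card) ^ k : ℕ) : ℝ) := by
  rw [Finset.sum_boole, ← avoid_count k A]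

lemma ie4' {α : Type*} [DecidableEq α] {k : ℕ} (A₁ A₂ A₃ A₄ : Finset α) (f : Fin k → α) :
    (if (¬∀ t, f t ∉ A₁) ∧ (¬∀ t, f t ∉ A₂) ∧ (¬∀ t, f t ∉ A₃) ∧ (¬∀ t, f t ∉ A₄)
      then (1:ℝ) else 0)
    = (if ∀ t, f t ∉ (∅ : Finset α) then (1:ℝ) else 0)
      - (if ∀ t, f t ∉ A₁ then (1:ℝ) else 0) - (if ∀ t, f t ∉ A₂ then (1:ℝ) else 0)
      - (if ∀ t, f t ∉ A₃ then (1:ℝ) else 0) - (if ∀ t, f t ∉ A₄ then (1:ℝ) else 0)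
      + (if ∀ t, f t ∉ A₁ ∪ A₂ then (1:ℝ) else 0) + (if ∀ t, f t ∉ A₁ ∪ A₃ then (1:ℝ) else 0)
      + (if ∀ t, f t ∉ A₁ ∪ A₄ then (1:ℝ) else 0) + (if ∀ t, f t ∉ A₂ ∪ A₃ then (1:ℝ) else 0)
      + (if ∀ t, f t ∉ A₂ ∪ A₄ then (1:ℝ) else 0) + (if ∀ t, f t ∉ A₃ ∪ A₄ then (1:ℝ) else 0)
      - (if ∀ t, f t ∉ A₁ ∪ A₂ ∪ A₃ then (1:ℝ) else 0)
      - (if ∀ t, f t ∉ A₁ ∪ A₂ ∪ A₄ then (1:ℝ) else 0)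
      - (if ∀ t, f t ∉ A₁ ∪ A₃ ∪ A₄ then (1:ℝ) else 0)
      - (if ∀ t, f t ∉ A₂ ∪ A₃ ∪ A₄ then (1:ℝ) else 0)
      + (if ∀ t, f t ∉ A₁ ∪ A₂ ∪ A₃ ∪ A₄ then (1:ℝ) else 0) := by
  have hu : ∀ A B : Finset α, (∀ t, f t ∉ A ∪ B) ↔ (∀ t, f t ∉ A) ∧ (∀ t, f t ∉ B) := by
    intro A B
    simp only [Finset.mem_union, not_or, forall_and]
  simp only [hu]
  by_cases h1 : ∀ t, f t ∉ A₁ <;> by_cases h2 : ∀ t, f t ∉ A₂ <;>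
    by_cases h3 : ∀ t, f t ∉ A₃ <;> by_cases h4 : ∀ t, f t ∉ A₄ <;>
    simp [h1, h2, h3, h4]

lemma sum_ie {α : Type*} [Fintype α] [DecidableEq α] (k : ℕ) (A₁ A₂ A₃ A₄ : Finset α) :
    ∑ f : Fin k → α,
      (if (¬∀ t, f t ∉ A₁) ∧ (¬∀ t, f t ∉ A₂) ∧ (¬∀ t, f t ∉ A₃) ∧ (¬∀ t, f t ∉ A₄)
        then (1:ℝ) else 0)
    = (((Fintype.card α - (∅:Finset α).card) ^ k : ℕ) : ℝ)
      - (((Fintype.card α - A₁.card) ^ k : ℕ) : ℝ) - (((Fintype.card α - A₂.card) ^ k : ℕ) : ℝ)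
      - (((Fintype.card α - A₃.card) ^ k : ℕ) : ℝ) - (((Fintype.card α - A₄.card) ^ k : ℕ) : ℝ)
      + (((Fintype.card α - (A₁ ∪ A₂).card) ^ k : ℕ) : ℝ)
      + (((Fintype.card α - (A₁ ∪ A₃).card) ^ k : ℕ) : ℝ)
      + (((Fintype.card α - (A₁ ∪ A₄).card) ^ k : ℕ) : ℝ)
      + (((Fintype.card α - (A₂ ∪ A₃).card) ^ k : ℕ) : ℝ)
      + (((Fintype.card α - (A₂ ∪ A₄).card) ^ k : ℕ) : ℝ)
      + (((Fintype.card α - (A₃ ∪ A₄).card) ^ k : ℕ) : ℝ)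
      - (((Fintype.card α - (A₁ ∪ A₂ ∪ A₃).card) ^ k : ℕ) : ℝ)
      - (((Fintype.card α - (A₁ ∪ A₂ ∪ A₄).card) ^ k : ℕ) : ℝ)
      - (((Fintype.card α - (A₁ ∪ A₃ ∪ A₄).card) ^ k : ℕ) : ℝ)
      - (((Fintype.card α - (A₂ ∪ A₃ ∪ A₄).card) ^ k : ℕ) : ℝ)
      + (((Fintype.card α - (A₁ ∪ A₂ ∪ A₃ ∪ A₄).card) ^ k : ℕ) : ℝ) := by
  rw [Finset.sum_congr rfl (fun f _ => ie4' A₁ A₂ A₃ A₄ f)]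
  simp only [Finset.sum_add_distrib, Finset.sum_sub_distrib, sum_avoid]



/-- For the 4-camera cube geometry and a random seeding with
sparsity parameter k, the expected number N_C of cells none of whose four
pixels is a zero measurement equals d³ − N_C^1 + N_C^2 − N_C^3 + N_C^4 with the
inclusion–exclusion terms N_C^1, …, N_C^4 as in Proposition 4.2. -/
theorem stmt_15 (d k : ℕ) (hd : 1 ≤ d)
    (π₁ π₂ π₃ π₄ : Fin d × Fin d × Fin d → ℤ × ℤ)
    -- cell (i,j,l) ∈ [d]³ is encoded by c with i = c.1+1, j = c.2.1+1, l = c.2.2+1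
    (hπ₁ : ∀ c, π₁ c = (((c.1 : ℤ) + 1) + ((c.2.2 : ℤ) + 1) - 1 - d, (c.2.1 : ℤ) + 1))
    (hπ₂ : ∀ c, π₂ c = (((c.1 : ℤ) + 1) - ((c.2.2 : ℤ) + 1), (c.2.1 : ℤ) + 1))
    (hπ₃ : ∀ c, π₃ c = ((c.1 : ℤ) + 1, ((c.2.1 : ℤ) + 1) + ((c.2.2 : ℤ) + 1) - 1 - d))
    (hπ₄ : ∀ c, π₄ c = ((c.1 : ℤ) + 1, ((c.2.1 : ℤ) + 1) - ((c.2.2 : ℤ) + 1)))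
    -- common ray length |r_s| = d − |s|
    (rlen : ℤ → ℝ) (hrlen : ∀ s : ℤ, rlen s = (d : ℝ) - |(s : ℝ)|)
    -- the functions R(k₁,k₂), R(k₁,k₂,k₃), R(k₁,k₂,k₃,k₄)
    (R₂ : ℤ → ℤ → ℝ)
    (hR₂ : ∀ a b : ℤ, R₂ a b = (1 - (rlen a + rlen b - 1) / (d : ℝ) ^ 3) ^ k)
    (R₃ : ℤ → ℤ → ℤ → ℝ)
    (hR₃ : ∀ a b e : ℤ,
      R₃ a b e = (1 - (rlen a + rlen b + rlen e - 2) / (d : ℝ) ^ 3) ^ k)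
    (R₄ : ℤ → ℤ → ℤ → ℤ → ℝ)
    (hR₄ : ∀ a b e g : ℤ,
      R₄ a b e g = (1 - (rlen a + rlen b + rlen e + rlen g - 3) / (d : ℝ) ^ 3) ^ k)
    -- the four inclusion–exclusion terms
    (NC₁ NC₂ NC₃ NC₄ : ℝ)
    (hNC₁ : NC₁ = 4 * (d : ℝ) * ((d : ℝ) * (1 - 1 / (d : ℝ) ^ 2) ^ k
      + 2 * ∑ s ∈ Finset.Icc 1 (d - 1), (s : ℝ) * (1 - (s : ℝ) / (d : ℝ) ^ 3) ^ k))
    (hNC₂ : NC₂ = 2 * (d : ℝ) * (∑ i ∈ Finset.Icc (1 : ℤ) (d : ℤ),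
        ∑ l ∈ Finset.Icc (1 : ℤ) (d : ℤ), R₂ (l + i - 1 - d) (i - l))
      + 4 * ∑ i ∈ Finset.Icc (1 : ℤ) (d : ℤ), ∑ j ∈ Finset.Icc (1 : ℤ) (d : ℤ),
          ∑ l ∈ Finset.Icc (1 : ℤ) (d : ℤ), R₂ (l - i) (l - j))
    (hNC₃ : NC₃ = 2 * ∑ i ∈ Finset.Icc (1 : ℤ) (d : ℤ),
        ∑ j ∈ Finset.Icc (1 : ℤ) (d : ℤ), ∑ l ∈ Finset.Icc (1 : ℤ) (d : ℤ),
          (R₃ (l + i - 1 - d) (l - i) (l - j) + R₃ (l - i) (l - j) (l + j - 1 - d)))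
    (hNC₄ : NC₄ = ∑ i ∈ Finset.Icc (1 : ℤ) (d : ℤ),
        ∑ j ∈ Finset.Icc (1 : ℤ) (d : ℤ), ∑ l ∈ Finset.Icc (1 : ℤ) (d : ℤ),
          R₄ (l + i - 1 - d) (l - i) (l + j - 1 - d) (l - j)) :
    -- expected number of cells whose four pixels are all nonzero measurements
    (∑ f : Fin k → Fin d × Fin d × Fin d,
        ((Finset.univ.filter fun c : Fin d × Fin d × Fin d =>
            (∃ t : Fin k, π₁ (f t) = π₁ c) ∧ (∃ t : Fin k, π₂ (f t) = π₂ c) ∧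
            (∃ t : Fin k, π₃ (f t) = π₃ c) ∧ (∃ t : Fin k, π₄ (f t) = π₄ c)).card : ℝ))
      / ((d : ℝ) ^ 3) ^ k
      = (d : ℝ) ^ 3 - NC₁ + NC₂ - NC₃ + NC₄ := by
  have hdz : (d:ℝ) ≠ 0 := by
    have : (0:ℝ) < d := by exact_mod_cast Nat.pos_of_ne_zero (by omega)
    exact this.ne'
  have hDk : (((d:ℝ)^3)^k) ≠ 0 := by positivity
  have hcardC : Fintype.card (Fin d × Fin d × Fin d) = d^3 := by
    simp only [Fintype.card_prod, Fintype.card_fin]; ring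
  have key : ∀ (B : Finset (Fin d × Fin d × Fin d)) (u : ℤ), (B.card : ℤ) = u →
      (((Fintype.card (Fin d × Fin d × Fin d) - B.card)^k : ℕ) : ℝ)
        = ((d:ℝ)^3)^k * (1 - (u:ℝ)/(d:ℝ)^3)^k := by
    intro B u hu
    have hle : B.card ≤ d^3 := hcardC ▸ Finset.card_le_univ B
    have hu' : ((B.card : ℕ) : ℝ) = (u:ℝ) := by exact_mod_cast congrArg Int.cast hu
    rw [hcardC, ← mul_pow, Nat.cast_pow, Nat.cast_sub hle]
    congr 1
    rw [← hu']
    push_cast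
    field_simp
  have hcell : ∀ x y z : Fin d,
      (∑ f : Fin k → Fin d × Fin d × Fin d,
        if (∃ t, π₁ (f t) = π₁ (x,y,z)) ∧ (∃ t, π₂ (f t) = π₂ (x,y,z)) ∧
           (∃ t, π₃ (f t) = π₃ (x,y,z)) ∧ (∃ t, π₄ (f t) = π₄ (x,y,z)) then (1:ℝ) else 0)
      = ((d:ℝ)^3)^k * (1
        - (1 - rlen ((x:ℤ)+(z:ℤ)+1-(d:ℤ)) / (d:ℝ)^3)^k
        - (1 - rlen ((x:ℤ)-(z:ℤ)) / (d:ℝ)^3)^k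
        - (1 - rlen ((y:ℤ)+(z:ℤ)+1-(d:ℤ)) / (d:ℝ)^3)^k
        - (1 - rlen ((y:ℤ)-(z:ℤ)) / (d:ℝ)^3)^k
        + R₂ ((x:ℤ)+(z:ℤ)+1-(d:ℤ)) ((x:ℤ)-(z:ℤ))
        + R₂ ((x:ℤ)+(z:ℤ)+1-(d:ℤ)) ((y:ℤ)+(z:ℤ)+1-(d:ℤ))
        + R₂ ((x:ℤ)+(z:ℤ)+1-(d:ℤ)) ((y:ℤ)-(z:ℤ))
        + R₂ ((x:ℤ)-(z:ℤ)) ((y:ℤ)+(z:ℤ)+1-(d:ℤ))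
        + R₂ ((x:ℤ)-(z:ℤ)) ((y:ℤ)-(z:ℤ))
        + R₂ ((y:ℤ)+(z:ℤ)+1-(d:ℤ)) ((y:ℤ)-(z:ℤ))
        - R₃ ((x:ℤ)+(z:ℤ)+1-(d:ℤ)) ((x:ℤ)-(z:ℤ)) ((y:ℤ)+(z:ℤ)+1-(d:ℤ))
        - R₃ ((x:ℤ)+(z:ℤ)+1-(d:ℤ)) ((x:ℤ)-(z:ℤ)) ((y:ℤ)-(z:ℤ))
        - R₃ ((x:ℤ)+(z:ℤ)+1-(d:ℤ)) ((y:ℤ)+(z:ℤ)+1-(d:ℤ)) ((y:ℤ)-(z:ℤ))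
        - R₃ ((x:ℤ)-(z:ℤ)) ((y:ℤ)+(z:ℤ)+1-(d:ℤ)) ((y:ℤ)-(z:ℤ))
        + R₄ ((x:ℤ)+(z:ℤ)+1-(d:ℤ)) ((x:ℤ)-(z:ℤ)) ((y:ℤ)+(z:ℤ)+1-(d:ℤ)) ((y:ℤ)-(z:ℤ))) := by
    intro x y z
    have hx := x.isLt; have hy := y.isLt; have hz := z.isLt
    set c : Fin d × Fin d × Fin d := (x,y,z) with hc
    set A₁ := Finset.univ.filter (fun c' : Fin d × Fin d × Fin d => π₁ c' = π₁ c) with hA1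
    set A₂ := Finset.univ.filter (fun c' : Fin d × Fin d × Fin d => π₂ c' = π₂ c) with hA2
    set A₃ := Finset.univ.filter (fun c' : Fin d × Fin d × Fin d => π₃ c' = π₃ c) with hA3
    set A₄ := Finset.univ.filter (fun c' : Fin d × Fin d × Fin d => π₄ c' = π₄ c) with hA4
    have hiff : ∀ f : Fin k → Fin d × Fin d × Fin d,
        ((∃ t, π₁ (f t) = π₁ c) ∧ (∃ t, π₂ (f t) = π₂ c) ∧
         (∃ t, π₃ (f t) = π₃ c) ∧ (∃ t, π₄ (f t) = π₄ c))
        ↔ ((¬∀ t, f t ∉ A₁) ∧ (¬∀ t, f t ∉ A₂) ∧ (¬∀ t, f t ∉ A₃) ∧ (¬∀ t, f t ∉ A₄)) := by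
      intro f
      simp only [hA1, hA2, hA3, hA4, Finset.mem_filter, Finset.mem_univ, true_and,
        not_forall, not_not]
    rw [Finset.sum_congr rfl (fun f _ => if_congr (hiff f) rfl rfl), sum_ie]
    -- ray cardinalities
    have hc1 : ((A₁.card : ℤ)) = (d:ℤ) - |(x:ℤ)+(z:ℤ)+1-(d:ℤ)| := by
      have he : A₁ = Finset.univ.filter (fun c' : Fin d × Fin d × Fin d =>
          ((c'.1:ℤ) + (c'.2.2:ℤ) = (x:ℤ) + (z:ℤ)) ∧ c'.2.1 = y) := by
        rw [hA1]
        apply Finset.filter_congr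
        intro c' _
        rw [hπ₁ c', hπ₁ c, hc]
        simp only [Prod.mk.injEq]
        constructor
        · rintro ⟨h1, h2⟩; exact ⟨by omega, Fin.ext (by omega)⟩
        · rintro ⟨h1, h2⟩; subst h2; exact ⟨by omega, rfl⟩
      rw [he, cardFix2 d (fun a b => (a:ℤ) + (b:ℤ) = (x:ℤ) + (z:ℤ)) y,
        cardAdd d ((x:ℤ)+(z:ℤ)) (by omega) (by omega)]
      have harg : (x:ℤ)+(z:ℤ)-((d:ℤ)-1) = (x:ℤ)+(z:ℤ)+1-(d:ℤ) := by ring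
      rw [harg]
    have hc2 : ((A₂.card : ℤ)) = (d:ℤ) - |(x:ℤ)-(z:ℤ)| := by
      have he : A₂ = Finset.univ.filter (fun c' : Fin d × Fin d × Fin d =>
          ((c'.1:ℤ) - (c'.2.2:ℤ) = (x:ℤ) - (z:ℤ)) ∧ c'.2.1 = y) := by
        rw [hA2]
        apply Finset.filter_congr
        intro c' _
        rw [hπ₂ c', hπ₂ c, hc]
        simp only [Prod.mk.injEq]
        constructor
        · rintro ⟨h1, h2⟩; exact ⟨by omega, Fin.ext (by omega)⟩
        · rintro ⟨h1, h2⟩; subst h2; exact ⟨by omega, rfl⟩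
      rw [he, cardFix2 d (fun a b => (a:ℤ) - (b:ℤ) = (x:ℤ) - (z:ℤ)) y,
        cardSub d ((x:ℤ)-(z:ℤ)) (abs_le.mpr ⟨by omega, by omega⟩)]
    have hc3 : ((A₃.card : ℤ)) = (d:ℤ) - |(y:ℤ)+(z:ℤ)+1-(d:ℤ)| := by
      have he : A₃ = Finset.univ.filter (fun c' : Fin d × Fin d × Fin d =>
          ((c'.2.1:ℤ) + (c'.2.2:ℤ) = (y:ℤ) + (z:ℤ)) ∧ c'.1 = x) := by
        rw [hA3]
        apply Finset.filter_congr
        intro c' _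
        rw [hπ₃ c', hπ₃ c, hc]
        simp only [Prod.mk.injEq]
        constructor
        · rintro ⟨h1, h2⟩; exact ⟨by omega, Fin.ext (by omega)⟩
        · rintro ⟨h1, h2⟩; subst h2; exact ⟨by omega, by omega⟩
      rw [he, cardFix1 d (fun a b => (a:ℤ) + (b:ℤ) = (y:ℤ) + (z:ℤ)) x,
        cardAdd d ((y:ℤ)+(z:ℤ)) (by omega) (by omega)]
      have harg : (y:ℤ)+(z:ℤ)-((d:ℤ)-1) = (y:ℤ)+(z:ℤ)+1-(d:ℤ) := by ring
      rw [harg]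
    have hc4 : ((A₄.card : ℤ)) = (d:ℤ) - |(y:ℤ)-(z:ℤ)| := by
      have he : A₄ = Finset.univ.filter (fun c' : Fin d × Fin d × Fin d =>
          ((c'.2.1:ℤ) - (c'.2.2:ℤ) = (y:ℤ) - (z:ℤ)) ∧ c'.1 = x) := by
        rw [hA4]
        apply Finset.filter_congr
        intro c' _
        rw [hπ₄ c', hπ₄ c, hc]
        simp only [Prod.mk.injEq]
        constructor
        · rintro ⟨h1, h2⟩; exact ⟨by omega, Fin.ext (by omega)⟩
        · rintro ⟨h1, h2⟩; subst h2; exact ⟨by omega, by omega⟩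
      rw [he, cardFix1 d (fun a b => (a:ℤ) - (b:ℤ) = (y:ℤ) - (z:ℤ)) x,
        cardSub d ((y:ℤ)-(z:ℤ)) (abs_le.mpr ⟨by omega, by omega⟩)]
    -- pairwise intersections
    have hI12 : A₁ ∩ A₂ = {c} := by
      ext ⟨a, b, e⟩
      simp only [hA1, hA2, Finset.mem_inter, Finset.mem_filter, Finset.mem_univ, true_and,
        Finset.mem_singleton, hπ₁, hπ₂, hc, Prod.mk.injEq]
      constructor
      · rintro ⟨⟨h1, h2⟩, h3, h4⟩
        exact ⟨Fin.ext (by omega), Fin.ext (by omega), Fin.ext (by omega)⟩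
      · rintro ⟨rfl, rfl, rfl⟩
        exact ⟨⟨rfl, rfl⟩, rfl, rfl⟩
    have hI13 : A₁ ∩ A₃ = {c} := by
      ext ⟨a, b, e⟩
      simp only [hA1, hA3, Finset.mem_inter, Finset.mem_filter, Finset.mem_univ, true_and,
        Finset.mem_singleton, hπ₁, hπ₃, hc, Prod.mk.injEq]
      constructor
      · rintro ⟨⟨h1, h2⟩, h3, h4⟩
        exact ⟨Fin.ext (by omega), Fin.ext (by omega), Fin.ext (by omega)⟩
      · rintro ⟨rfl, rfl, rfl⟩
        exact ⟨⟨rfl, rfl⟩, rfl, rfl⟩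
    have hI14 : A₁ ∩ A₄ = {c} := by
      ext ⟨a, b, e⟩
      simp only [hA1, hA4, Finset.mem_inter, Finset.mem_filter, Finset.mem_univ, true_and,
        Finset.mem_singleton, hπ₁, hπ₄, hc, Prod.mk.injEq]
      constructor
      · rintro ⟨⟨h1, h2⟩, h3, h4⟩
        exact ⟨Fin.ext (by omega), Fin.ext (by omega), Fin.ext (by omega)⟩
      · rintro ⟨rfl, rfl, rfl⟩
        exact ⟨⟨rfl, rfl⟩, rfl, rfl⟩
    have hI23 : A₂ ∩ A₃ = {c} := by
      ext ⟨a, b, e⟩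
      simp only [hA2, hA3, Finset.mem_inter, Finset.mem_filter, Finset.mem_univ, true_and,
        Finset.mem_singleton, hπ₂, hπ₃, hc, Prod.mk.injEq]
      constructor
      · rintro ⟨⟨h1, h2⟩, h3, h4⟩
        exact ⟨Fin.ext (by omega), Fin.ext (by omega), Fin.ext (by omega)⟩
      · rintro ⟨rfl, rfl, rfl⟩
        exact ⟨⟨rfl, rfl⟩, rfl, rfl⟩
    have hI24 : A₂ ∩ A₄ = {c} := by
      ext ⟨a, b, e⟩
      simp only [hA2, hA4, Finset.mem_inter, Finset.mem_filter, Finset.mem_univ, true_and,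
        Finset.mem_singleton, hπ₂, hπ₄, hc, Prod.mk.injEq]
      constructor
      · rintro ⟨⟨h1, h2⟩, h3, h4⟩
        exact ⟨Fin.ext (by omega), Fin.ext (by omega), Fin.ext (by omega)⟩
      · rintro ⟨rfl, rfl, rfl⟩
        exact ⟨⟨rfl, rfl⟩, rfl, rfl⟩
    have hI34 : A₃ ∩ A₄ = {c} := by
      ext ⟨a, b, e⟩
      simp only [hA3, hA4, Finset.mem_inter, Finset.mem_filter, Finset.mem_univ, true_and,
        Finset.mem_singleton, hπ₃, hπ₄, hc, Prod.mk.injEq]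
      constructor
      · rintro ⟨⟨h1, h2⟩, h3, h4⟩
        exact ⟨Fin.ext (by omega), Fin.ext (by omega), Fin.ext (by omega)⟩
      · rintro ⟨rfl, rfl, rfl⟩
        exact ⟨⟨rfl, rfl⟩, rfl, rfl⟩
    -- rewrite all sixteen counts
    rw [key ∅ 0 (by simp),
      key A₁ _ hc1, key A₂ _ hc2, key A₃ _ hc3, key A₄ _ hc4,
      key (A₁ ∪ A₂) _ (by rw [unionCard2 hI12, hc1, hc2]),
      key (A₁ ∪ A₃) _ (by rw [unionCard2 hI13, hc1, hc3]),
      key (A₁ ∪ A₄) _ (by rw [unionCard2 hI14, hc1, hc4]),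
      key (A₂ ∪ A₃) _ (by rw [unionCard2 hI23, hc2, hc3]),
      key (A₂ ∪ A₄) _ (by rw [unionCard2 hI24, hc2, hc4]),
      key (A₃ ∪ A₄) _ (by rw [unionCard2 hI34, hc3, hc4]),
      key (A₁ ∪ A₂ ∪ A₃) _ (by rw [unionCard3 hI12 hI13 hI23, hc1, hc2, hc3]),
      key (A₁ ∪ A₂ ∪ A₄) _ (by rw [unionCard3 hI12 hI14 hI24, hc1, hc2, hc4]),
      key (A₁ ∪ A₃ ∪ A₄) _ (by rw [unionCard3 hI13 hI14 hI34, hc1, hc3, hc4]),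
      key (A₂ ∪ A₃ ∪ A₄) _ (by rw [unionCard3 hI23 hI24 hI34, hc2, hc3, hc4]),
      key (A₁ ∪ A₂ ∪ A₃ ∪ A₄) _
        (by rw [unionCard4 hI12 hI13 hI14 hI23 hI24 hI34, hc1, hc2, hc3, hc4])]
    simp only [hR₂, hR₃, hR₄, hrlen]
    push_cast [Int.cast_abs]
    ring
  -- final assembly
  have hnum : (∑ f : Fin k → Fin d × Fin d × Fin d,
      ((Finset.univ.filter fun c : Fin d × Fin d × Fin d =>
          (∃ t : Fin k, π₁ (f t) = π₁ c) ∧ (∃ t : Fin k, π₂ (f t) = π₂ c) ∧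
          (∃ t : Fin k, π₃ (f t) = π₃ c) ∧ (∃ t : Fin k, π₄ (f t) = π₄ c)).card : ℝ))
      = ∑ c : Fin d × Fin d × Fin d, ∑ f : Fin k → Fin d × Fin d × Fin d,
          if (∃ t : Fin k, π₁ (f t) = π₁ c) ∧ (∃ t : Fin k, π₂ (f t) = π₂ c) ∧
             (∃ t : Fin k, π₃ (f t) = π₃ c) ∧ (∃ t : Fin k, π₄ (f t) = π₄ c)
          then (1:ℝ) else 0 := by
    rw [Finset.sum_comm]
    exact Finset.sum_congr rfl fun f _ => (Finset.sum_boole _ _).symm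
  rw [hnum, Fintype.sum_prod_type]
  have hrw : ∀ x : Fin d, ∑ c₂ : Fin d × Fin d,
      (∑ f : Fin k → Fin d × Fin d × Fin d,
        if (∃ t : Fin k, π₁ (f t) = π₁ (x, c₂)) ∧ (∃ t : Fin k, π₂ (f t) = π₂ (x, c₂)) ∧
           (∃ t : Fin k, π₃ (f t) = π₃ (x, c₂)) ∧ (∃ t : Fin k, π₄ (f t) = π₄ (x, c₂))
        then (1:ℝ) else 0)
      = ∑ y : Fin d, ∑ z : Fin d, ((d:ℝ)^3)^k * (1
        - (1 - rlen ((x:ℤ)+(z:ℤ)+1-(d:ℤ)) / (d:ℝ)^3)^k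
        - (1 - rlen ((x:ℤ)-(z:ℤ)) / (d:ℝ)^3)^k
        - (1 - rlen ((y:ℤ)+(z:ℤ)+1-(d:ℤ)) / (d:ℝ)^3)^k
        - (1 - rlen ((y:ℤ)-(z:ℤ)) / (d:ℝ)^3)^k
        + R₂ ((x:ℤ)+(z:ℤ)+1-(d:ℤ)) ((x:ℤ)-(z:ℤ))
        + R₂ ((x:ℤ)+(z:ℤ)+1-(d:ℤ)) ((y:ℤ)+(z:ℤ)+1-(d:ℤ))
        + R₂ ((x:ℤ)+(z:ℤ)+1-(d:ℤ)) ((y:ℤ)-(z:ℤ))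
        + R₂ ((x:ℤ)-(z:ℤ)) ((y:ℤ)+(z:ℤ)+1-(d:ℤ))
        + R₂ ((x:ℤ)-(z:ℤ)) ((y:ℤ)-(z:ℤ))
        + R₂ ((y:ℤ)+(z:ℤ)+1-(d:ℤ)) ((y:ℤ)-(z:ℤ))
        - R₃ ((x:ℤ)+(z:ℤ)+1-(d:ℤ)) ((x:ℤ)-(z:ℤ)) ((y:ℤ)+(z:ℤ)+1-(d:ℤ))
        - R₃ ((x:ℤ)+(z:ℤ)+1-(d:ℤ)) ((x:ℤ)-(z:ℤ)) ((y:ℤ)-(z:ℤ))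
        - R₃ ((x:ℤ)+(z:ℤ)+1-(d:ℤ)) ((y:ℤ)+(z:ℤ)+1-(d:ℤ)) ((y:ℤ)-(z:ℤ))
        - R₃ ((x:ℤ)-(z:ℤ)) ((y:ℤ)+(z:ℤ)+1-(d:ℤ)) ((y:ℤ)-(z:ℤ))
        + R₄ ((x:ℤ)+(z:ℤ)+1-(d:ℤ)) ((x:ℤ)-(z:ℤ)) ((y:ℤ)+(z:ℤ)+1-(d:ℤ)) ((y:ℤ)-(z:ℤ))) := by
    intro x
    rw [Fintype.sum_prod_type]
    exact Finset.sum_congr rfl fun y _ => Finset.sum_congr rfl fun z _ => hcell x y z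
  rw [Finset.sum_congr rfl fun x _ => hrw x]
  simp only [← Finset.mul_sum]
  rw [mul_div_cancel_left₀ _ hDk]
  -- helpers
  have hrev : ∀ w : Fin d, ((w.rev : ℤ)) = (d:ℤ) - (w:ℤ) - 1 := by
    intro w
    have := w.isLt
    simp only [Fin.val_rev]
    omega
  have rlen_eq : ∀ a b : ℤ, |a| = |b| → rlen a = rlen b := by
    intro a b h
    rw [hrlen, hrlen, ← Int.cast_abs, ← Int.cast_abs, h]
  have hGc : ∀ a b : ℤ, |a| = |b| → (1 - rlen a/(d:ℝ)^3)^k = (1 - rlen b/(d:ℝ)^3)^k := by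
    intro a b h
    rw [rlen_eq a b h]
  have hR₂c : ∀ a a' b b' : ℤ, |a| = |a'| → |b| = |b'| → R₂ a b = R₂ a' b' := by
    intro a a' b b' h1 h2
    rw [hR₂, hR₂, rlen_eq a a' h1, rlen_eq b b' h2]
  have hR₃c : ∀ a a' b b' e e' : ℤ, |a| = |a'| → |b| = |b'| → |e| = |e'| →
      R₃ a b e = R₃ a' b' e' := by
    intro a a' b b' e e' h1 h2 h3
    rw [hR₃, hR₃, rlen_eq a a' h1, rlen_eq b b' h2, rlen_eq e e' h3]
  have hR₄c : ∀ a a' b b' e e' g g' : ℤ, |a| = |a'| → |b| = |b'| → |e| = |e'| → |g| = |g'| →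
      R₄ a b e g = R₄ a' b' e' g' := by
    intro a a' b b' e e' g g' h1 h2 h3 h4
    rw [hR₄, hR₄, rlen_eq a a' h1, rlen_eq b b' h2, rlen_eq e e' h3, rlen_eq g g' h4]
  have hmid : ∀ F : Fin d → Fin d → ℝ,
      (∑ x : Fin d, ∑ y : Fin d, ∑ z : Fin d, F x z) = (d:ℝ) * ∑ x : Fin d, ∑ z : Fin d, F x z := by
    intro F
    have h1 : ∀ x : Fin d, (∑ _y : Fin d, ∑ z : Fin d, F x z) = (d:ℝ) * ∑ z : Fin d, F x z := by
      intro x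
      rw [Finset.sum_const, Finset.card_univ, Fintype.card_fin, nsmul_eq_mul]
    rw [Finset.sum_congr rfl fun x _ => h1 x, ← Finset.mul_sum]
  have houter : ∀ F : Fin d → Fin d → ℝ,
      (∑ x : Fin d, ∑ y : Fin d, ∑ z : Fin d, F y z) = (d:ℝ) * ∑ y : Fin d, ∑ z : Fin d, F y z := by
    intro F
    rw [Finset.sum_const, Finset.card_univ, Fintype.card_fin, nsmul_eq_mul]
  -- the core diagonal sum
  have hW : (∑ x : Fin d, ∑ z : Fin d, (1 - rlen ((x:ℤ)+(z:ℤ)+1-(d:ℤ)) / (d:ℝ)^3)^k)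
      = (d:ℝ)*(1-1/(d:ℝ)^2)^k
        + 2 * ∑ s ∈ Finset.Icc 1 (d - 1), (s : ℝ) * (1 - (s : ℝ) / (d : ℝ) ^ 3) ^ k := by
    have hdiag := diag_sum d hd (fun w => (1 - ((w:ℤ):ℝ)/(d:ℝ)^3)^k)
    rw [Fintype.sum_prod_type] at hdiag
    dsimp only at hdiag
    have hpt : ∀ x z : Fin d,
        (1 - rlen ((x:ℤ)+(z:ℤ)+1-(d:ℤ)) / (d:ℝ)^3)^k
          = (1 - ((((d:ℤ) - |(x:ℤ)+(z:ℤ)-((d:ℤ)-1)| : ℤ)):ℝ)/(d:ℝ)^3)^k := by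
      intro x z
      rw [show (x:ℤ)+(z:ℤ)-((d:ℤ)-1) = (x:ℤ)+(z:ℤ)+1-(d:ℤ) from by ring, hrlen]
      push_cast [Int.cast_abs]
      ring_nf
    rw [Finset.sum_congr rfl fun x _ => Finset.sum_congr rfl fun z _ => hpt x z, hdiag]
    have h1 : (1 - (((d:ℤ)):ℝ)/(d:ℝ)^3)^k = (1-1/(d:ℝ)^2)^k := by
      congr 1
      push_cast
      field_simp
    rw [h1]
    congr 1
  -- RHS sum conversions
  have hSA : (∑ i ∈ Finset.Icc (1:ℤ) (d:ℤ), ∑ l ∈ Finset.Icc (1:ℤ) (d:ℤ), R₂ (l + i - 1 - (d:ℤ)) (i - l))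
      = ∑ x : Fin d, ∑ z : Fin d, R₂ ((x:ℤ)+(z:ℤ)+1-(d:ℤ)) ((x:ℤ)-(z:ℤ)) := by
    rw [sum_Icc_fin d]
    refine Finset.sum_congr rfl fun x _ => ?_
    rw [sum_Icc_fin d]
    refine Finset.sum_congr rfl fun z _ => ?_
    rw [show ((z:ℤ)+1) + ((x:ℤ)+1) - 1 - (d:ℤ) = (x:ℤ)+(z:ℤ)+1-(d:ℤ) from by ring,
        show ((x:ℤ)+1) - ((z:ℤ)+1) = (x:ℤ)-(z:ℤ) from by ring]
  have hSB : (∑ i ∈ Finset.Icc (1:ℤ) (d:ℤ), ∑ j ∈ Finset.Icc (1:ℤ) (d:ℤ), ∑ l ∈ Finset.Icc (1:ℤ) (d:ℤ), R₂ (l - i) (l - j))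
      = ∑ x : Fin d, ∑ y : Fin d, ∑ z : Fin d, R₂ ((z:ℤ)-(x:ℤ)) ((z:ℤ)-(y:ℤ)) := by
    rw [sum_Icc_fin d]
    refine Finset.sum_congr rfl fun x _ => ?_
    rw [sum_Icc_fin d]
    refine Finset.sum_congr rfl fun y _ => ?_
    rw [sum_Icc_fin d]
    refine Finset.sum_congr rfl fun z _ => ?_
    rw [show ((z:ℤ)+1) - ((x:ℤ)+1) = (z:ℤ)-(x:ℤ) from by ring,
        show ((z:ℤ)+1) - ((y:ℤ)+1) = (z:ℤ)-(y:ℤ) from by ring]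
  have hSC : (∑ i ∈ Finset.Icc (1:ℤ) (d:ℤ), ∑ j ∈ Finset.Icc (1:ℤ) (d:ℤ), ∑ l ∈ Finset.Icc (1:ℤ) (d:ℤ), R₃ (l + i - 1 - (d:ℤ)) (l - i) (l - j))
      = ∑ x : Fin d, ∑ y : Fin d, ∑ z : Fin d, R₃ ((x:ℤ)+(z:ℤ)+1-(d:ℤ)) ((z:ℤ)-(x:ℤ)) ((z:ℤ)-(y:ℤ)) := by
    rw [sum_Icc_fin d]
    refine Finset.sum_congr rfl fun x _ => ?_
    rw [sum_Icc_fin d]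
    refine Finset.sum_congr rfl fun y _ => ?_
    rw [sum_Icc_fin d]
    refine Finset.sum_congr rfl fun z _ => ?_
    rw [show ((z:ℤ)+1) + ((x:ℤ)+1) - 1 - (d:ℤ) = (x:ℤ)+(z:ℤ)+1-(d:ℤ) from by ring,
        show ((z:ℤ)+1) - ((x:ℤ)+1) = (z:ℤ)-(x:ℤ) from by ring,
        show ((z:ℤ)+1) - ((y:ℤ)+1) = (z:ℤ)-(y:ℤ) from by ring]
  have hSD : (∑ i ∈ Finset.Icc (1:ℤ) (d:ℤ), ∑ j ∈ Finset.Icc (1:ℤ) (d:ℤ), ∑ l ∈ Finset.Icc (1:ℤ) (d:ℤ), R₃ (l - i) (l - j) (l + j - 1 - (d:ℤ)))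
      = ∑ x : Fin d, ∑ y : Fin d, ∑ z : Fin d, R₃ ((z:ℤ)-(x:ℤ)) ((z:ℤ)-(y:ℤ)) ((y:ℤ)+(z:ℤ)+1-(d:ℤ)) := by
    rw [sum_Icc_fin d]
    refine Finset.sum_congr rfl fun x _ => ?_
    rw [sum_Icc_fin d]
    refine Finset.sum_congr rfl fun y _ => ?_
    rw [sum_Icc_fin d]
    refine Finset.sum_congr rfl fun z _ => ?_
    rw [show ((z:ℤ)+1) - ((x:ℤ)+1) = (z:ℤ)-(x:ℤ) from by ring,
        show ((z:ℤ)+1) - ((y:ℤ)+1) = (z:ℤ)-(y:ℤ) from by ring,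
        show ((z:ℤ)+1) + ((y:ℤ)+1) - 1 - (d:ℤ) = (y:ℤ)+(z:ℤ)+1-(d:ℤ) from by ring]
  have hSE : (∑ i ∈ Finset.Icc (1:ℤ) (d:ℤ), ∑ j ∈ Finset.Icc (1:ℤ) (d:ℤ), ∑ l ∈ Finset.Icc (1:ℤ) (d:ℤ),
        R₄ (l + i - 1 - (d:ℤ)) (l - i) (l + j - 1 - (d:ℤ)) (l - j))
      = ∑ x : Fin d, ∑ y : Fin d, ∑ z : Fin d, R₄ ((x:ℤ)+(z:ℤ)+1-(d:ℤ)) ((z:ℤ)-(x:ℤ)) ((y:ℤ)+(z:ℤ)+1-(d:ℤ)) ((z:ℤ)-(y:ℤ)) := by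
    rw [sum_Icc_fin d]
    refine Finset.sum_congr rfl fun x _ => ?_
    rw [sum_Icc_fin d]
    refine Finset.sum_congr rfl fun y _ => ?_
    rw [sum_Icc_fin d]
    refine Finset.sum_congr rfl fun z _ => ?_
    rw [show ((z:ℤ)+1) + ((x:ℤ)+1) - 1 - (d:ℤ) = (x:ℤ)+(z:ℤ)+1-(d:ℤ) from by ring,
        show ((z:ℤ)+1) - ((x:ℤ)+1) = (z:ℤ)-(x:ℤ) from by ring,
        show ((z:ℤ)+1) + ((y:ℤ)+1) - 1 - (d:ℤ) = (y:ℤ)+(z:ℤ)+1-(d:ℤ) from by ring,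
        show ((z:ℤ)+1) - ((y:ℤ)+1) = (z:ℤ)-(y:ℤ) from by ring]
  -- LHS group identities
  have T0 : (∑ x : Fin d, ∑ y : Fin d, ∑ z : Fin d, (1:ℝ)) = (d:ℝ)^3 := by
    simp [Finset.sum_const, Finset.card_univ, Fintype.card_fin, nsmul_eq_mul]
    ring
  have T1a : (∑ x : Fin d, ∑ y : Fin d, ∑ z : Fin d, (1 - rlen ((x:ℤ)+(z:ℤ)+1-(d:ℤ)) / (d:ℝ)^3)^k) = (d:ℝ) * ((d:ℝ)*(1-1/(d:ℝ)^2)^k + 2 * ∑ s ∈ Finset.Icc 1 (d - 1), (s : ℝ) * (1 - (s : ℝ) / (d : ℝ) ^ 3) ^ k) := by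
    rw [hmid _, hW]
  have T1b : (∑ x : Fin d, ∑ y : Fin d, ∑ z : Fin d, (1 - rlen ((x:ℤ)-(z:ℤ)) / (d:ℝ)^3)^k) = (d:ℝ) * ((d:ℝ)*(1-1/(d:ℝ)^2)^k + 2 * ∑ s ∈ Finset.Icc 1 (d - 1), (s : ℝ) * (1 - (s : ℝ) / (d : ℝ) ^ 3) ^ k) := by
    rw [hmid _, ← hW]
    congr 1
    refine (sum_fin_rev d (fun x : Fin d => ∑ z : Fin d, (1 - rlen ((x:ℤ)-(z:ℤ)) / (d:ℝ)^3)^k)).trans ?_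
    refine Finset.sum_congr rfl fun x _ => Finset.sum_congr rfl fun z _ => ?_
    exact hGc _ _ (by rw [show ((x.rev:ℤ)) - (z:ℤ) = -((x:ℤ)+(z:ℤ)+1-(d:ℤ)) from by
      rw [hrev x]; ring]; exact abs_neg _)
  have T1c : (∑ x : Fin d, ∑ y : Fin d, ∑ z : Fin d, (1 - rlen ((y:ℤ)+(z:ℤ)+1-(d:ℤ)) / (d:ℝ)^3)^k) = (d:ℝ) * ((d:ℝ)*(1-1/(d:ℝ)^2)^k + 2 * ∑ s ∈ Finset.Icc 1 (d - 1), (s : ℝ) * (1 - (s : ℝ) / (d : ℝ) ^ 3) ^ k) := by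
    rw [houter _, ← hW]
  have T1d : (∑ x : Fin d, ∑ y : Fin d, ∑ z : Fin d, (1 - rlen ((y:ℤ)-(z:ℤ)) / (d:ℝ)^3)^k) = (d:ℝ) * ((d:ℝ)*(1-1/(d:ℝ)^2)^k + 2 * ∑ s ∈ Finset.Icc 1 (d - 1), (s : ℝ) * (1 - (s : ℝ) / (d : ℝ) ^ 3) ^ k) := by
    rw [houter _, ← hW]
    congr 1
    refine (sum_fin_rev d (fun y : Fin d => ∑ z : Fin d, (1 - rlen ((y:ℤ)-(z:ℤ)) / (d:ℝ)^3)^k)).trans ?_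
    refine Finset.sum_congr rfl fun y _ => Finset.sum_congr rfl fun z _ => ?_
    exact hGc _ _ (by rw [show ((y.rev:ℤ)) - (z:ℤ) = -((y:ℤ)+(z:ℤ)+1-(d:ℤ)) from by
      rw [hrev y]; ring]; exact abs_neg _)
  have L12 : (∑ x : Fin d, ∑ y : Fin d, ∑ z : Fin d, R₂ ((x:ℤ)+(z:ℤ)+1-(d:ℤ)) ((x:ℤ)-(z:ℤ))) = (d:ℝ) * (∑ x : Fin d, ∑ z : Fin d, R₂ ((x:ℤ)+(z:ℤ)+1-(d:ℤ)) ((x:ℤ)-(z:ℤ))) := hmid _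
  have L34 : (∑ x : Fin d, ∑ y : Fin d, ∑ z : Fin d, R₂ ((y:ℤ)+(z:ℤ)+1-(d:ℤ)) ((y:ℤ)-(z:ℤ))) = (d:ℝ) * (∑ x : Fin d, ∑ z : Fin d, R₂ ((x:ℤ)+(z:ℤ)+1-(d:ℤ)) ((x:ℤ)-(z:ℤ))) := houter _
  have L13 : (∑ x : Fin d, ∑ y : Fin d, ∑ z : Fin d, R₂ ((x:ℤ)+(z:ℤ)+1-(d:ℤ)) ((y:ℤ)+(z:ℤ)+1-(d:ℤ))) = ∑ x : Fin d, ∑ y : Fin d, ∑ z : Fin d, R₂ ((z:ℤ)-(x:ℤ)) ((z:ℤ)-(y:ℤ)) := by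
    refine (sum_fin_rev d (fun x : Fin d => ∑ y : Fin d, ∑ z : Fin d,
      R₂ ((x:ℤ)+(z:ℤ)+1-(d:ℤ)) ((y:ℤ)+(z:ℤ)+1-(d:ℤ)))).trans ?_
    refine Finset.sum_congr rfl fun x _ => ?_
    refine (sum_fin_rev d (fun y : Fin d => ∑ z : Fin d,
      R₂ ((x.rev:ℤ)+(z:ℤ)+1-(d:ℤ)) ((y:ℤ)+(z:ℤ)+1-(d:ℤ)))).trans ?_
    refine Finset.sum_congr rfl fun y _ => Finset.sum_congr rfl fun z _ => ?_
    rw [show ((x.rev:ℤ))+(z:ℤ)+1-(d:ℤ) = (z:ℤ)-(x:ℤ) from by rw [hrev x]; ring,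
        show ((y.rev:ℤ))+(z:ℤ)+1-(d:ℤ) = (z:ℤ)-(y:ℤ) from by rw [hrev y]; ring]
  have L14 : (∑ x : Fin d, ∑ y : Fin d, ∑ z : Fin d, R₂ ((x:ℤ)+(z:ℤ)+1-(d:ℤ)) ((y:ℤ)-(z:ℤ))) = ∑ x : Fin d, ∑ y : Fin d, ∑ z : Fin d, R₂ ((z:ℤ)-(x:ℤ)) ((z:ℤ)-(y:ℤ)) := by
    refine (sum_fin_rev d (fun x : Fin d => ∑ y : Fin d, ∑ z : Fin d,
      R₂ ((x:ℤ)+(z:ℤ)+1-(d:ℤ)) ((y:ℤ)-(z:ℤ)))).trans ?_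
    refine Finset.sum_congr rfl fun x _ => Finset.sum_congr rfl fun y _ =>
      Finset.sum_congr rfl fun z _ => ?_
    rw [show ((x.rev:ℤ))+(z:ℤ)+1-(d:ℤ) = (z:ℤ)-(x:ℤ) from by rw [hrev x]; ring]
    exact hR₂c _ _ _ _ rfl (abs_sub_comm _ _)
  have L23 : (∑ x : Fin d, ∑ y : Fin d, ∑ z : Fin d, R₂ ((x:ℤ)-(z:ℤ)) ((y:ℤ)+(z:ℤ)+1-(d:ℤ))) = ∑ x : Fin d, ∑ y : Fin d, ∑ z : Fin d, R₂ ((z:ℤ)-(x:ℤ)) ((z:ℤ)-(y:ℤ)) := by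
    refine Finset.sum_congr rfl fun x _ => ?_
    refine (sum_fin_rev d (fun y : Fin d => ∑ z : Fin d,
      R₂ ((x:ℤ)-(z:ℤ)) ((y:ℤ)+(z:ℤ)+1-(d:ℤ)))).trans ?_
    refine Finset.sum_congr rfl fun y _ => Finset.sum_congr rfl fun z _ => ?_
    rw [show ((y.rev:ℤ))+(z:ℤ)+1-(d:ℤ) = (z:ℤ)-(y:ℤ) from by rw [hrev y]; ring]
    exact hR₂c _ _ _ _ (abs_sub_comm _ _) rfl
  have L24 : (∑ x : Fin d, ∑ y : Fin d, ∑ z : Fin d, R₂ ((x:ℤ)-(z:ℤ)) ((y:ℤ)-(z:ℤ))) = ∑ x : Fin d, ∑ y : Fin d, ∑ z : Fin d, R₂ ((z:ℤ)-(x:ℤ)) ((z:ℤ)-(y:ℤ)) := by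
    refine Finset.sum_congr rfl fun x _ => Finset.sum_congr rfl fun y _ =>
      Finset.sum_congr rfl fun z _ => ?_
    exact hR₂c _ _ _ _ (abs_sub_comm _ _) (abs_sub_comm _ _)
  have L123 : (∑ x : Fin d, ∑ y : Fin d, ∑ z : Fin d, R₃ ((x:ℤ)+(z:ℤ)+1-(d:ℤ)) ((x:ℤ)-(z:ℤ)) ((y:ℤ)+(z:ℤ)+1-(d:ℤ))) = ∑ x : Fin d, ∑ y : Fin d, ∑ z : Fin d, R₃ ((x:ℤ)+(z:ℤ)+1-(d:ℤ)) ((z:ℤ)-(x:ℤ)) ((z:ℤ)-(y:ℤ)) := by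
    refine Finset.sum_congr rfl fun x _ => ?_
    refine (sum_fin_rev d (fun y : Fin d => ∑ z : Fin d,
      R₃ ((x:ℤ)+(z:ℤ)+1-(d:ℤ)) ((x:ℤ)-(z:ℤ)) ((y:ℤ)+(z:ℤ)+1-(d:ℤ)))).trans ?_
    refine Finset.sum_congr rfl fun y _ => Finset.sum_congr rfl fun z _ => ?_
    rw [show ((y.rev:ℤ))+(z:ℤ)+1-(d:ℤ) = (z:ℤ)-(y:ℤ) from by rw [hrev y]; ring]
    exact hR₃c _ _ _ _ _ _ rfl (abs_sub_comm _ _) rfl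
  have L124 : (∑ x : Fin d, ∑ y : Fin d, ∑ z : Fin d, R₃ ((x:ℤ)+(z:ℤ)+1-(d:ℤ)) ((x:ℤ)-(z:ℤ)) ((y:ℤ)-(z:ℤ))) = ∑ x : Fin d, ∑ y : Fin d, ∑ z : Fin d, R₃ ((x:ℤ)+(z:ℤ)+1-(d:ℤ)) ((z:ℤ)-(x:ℤ)) ((z:ℤ)-(y:ℤ)) := by
    refine Finset.sum_congr rfl fun x _ => Finset.sum_congr rfl fun y _ =>
      Finset.sum_congr rfl fun z _ => ?_
    exact hR₃c _ _ _ _ _ _ rfl (abs_sub_comm _ _) (abs_sub_comm _ _)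
  have L134 : (∑ x : Fin d, ∑ y : Fin d, ∑ z : Fin d, R₃ ((x:ℤ)+(z:ℤ)+1-(d:ℤ)) ((y:ℤ)+(z:ℤ)+1-(d:ℤ)) ((y:ℤ)-(z:ℤ))) = ∑ x : Fin d, ∑ y : Fin d, ∑ z : Fin d, R₃ ((z:ℤ)-(x:ℤ)) ((z:ℤ)-(y:ℤ)) ((y:ℤ)+(z:ℤ)+1-(d:ℤ)) := by
    refine (sum_fin_rev d (fun x : Fin d => ∑ y : Fin d, ∑ z : Fin d,
      R₃ ((x:ℤ)+(z:ℤ)+1-(d:ℤ)) ((y:ℤ)+(z:ℤ)+1-(d:ℤ)) ((y:ℤ)-(z:ℤ)))).trans ?_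
    refine Finset.sum_congr rfl fun x _ => ?_
    refine (sum_fin_rev d (fun y : Fin d => ∑ z : Fin d,
      R₃ ((x.rev:ℤ)+(z:ℤ)+1-(d:ℤ)) ((y:ℤ)+(z:ℤ)+1-(d:ℤ)) ((y:ℤ)-(z:ℤ)))).trans ?_
    refine Finset.sum_congr rfl fun y _ => Finset.sum_congr rfl fun z _ => ?_
    rw [show ((x.rev:ℤ))+(z:ℤ)+1-(d:ℤ) = (z:ℤ)-(x:ℤ) from by rw [hrev x]; ring,
        show ((y.rev:ℤ))+(z:ℤ)+1-(d:ℤ) = (z:ℤ)-(y:ℤ) from by rw [hrev y]; ring,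
        show ((y.rev:ℤ))-(z:ℤ) = -((y:ℤ)+(z:ℤ)+1-(d:ℤ)) from by rw [hrev y]; ring]
    exact hR₃c _ _ _ _ _ _ rfl rfl (abs_neg _)
  have L234 : (∑ x : Fin d, ∑ y : Fin d, ∑ z : Fin d, R₃ ((x:ℤ)-(z:ℤ)) ((y:ℤ)+(z:ℤ)+1-(d:ℤ)) ((y:ℤ)-(z:ℤ))) = ∑ x : Fin d, ∑ y : Fin d, ∑ z : Fin d, R₃ ((z:ℤ)-(x:ℤ)) ((z:ℤ)-(y:ℤ)) ((y:ℤ)+(z:ℤ)+1-(d:ℤ)) := by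
    refine Finset.sum_congr rfl fun x _ => ?_
    refine (sum_fin_rev d (fun y : Fin d => ∑ z : Fin d,
      R₃ ((x:ℤ)-(z:ℤ)) ((y:ℤ)+(z:ℤ)+1-(d:ℤ)) ((y:ℤ)-(z:ℤ)))).trans ?_
    refine Finset.sum_congr rfl fun y _ => Finset.sum_congr rfl fun z _ => ?_
    rw [show ((y.rev:ℤ))+(z:ℤ)+1-(d:ℤ) = (z:ℤ)-(y:ℤ) from by rw [hrev y]; ring,
        show ((y.rev:ℤ))-(z:ℤ) = -((y:ℤ)+(z:ℤ)+1-(d:ℤ)) from by rw [hrev y]; ring]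
    exact hR₃c _ _ _ _ _ _ (abs_sub_comm _ _) rfl (abs_neg _)
  have L1234 : (∑ x : Fin d, ∑ y : Fin d, ∑ z : Fin d, R₄ ((x:ℤ)+(z:ℤ)+1-(d:ℤ)) ((x:ℤ)-(z:ℤ)) ((y:ℤ)+(z:ℤ)+1-(d:ℤ)) ((y:ℤ)-(z:ℤ))) = ∑ x : Fin d, ∑ y : Fin d, ∑ z : Fin d, R₄ ((x:ℤ)+(z:ℤ)+1-(d:ℤ)) ((z:ℤ)-(x:ℤ)) ((y:ℤ)+(z:ℤ)+1-(d:ℤ)) ((z:ℤ)-(y:ℤ)) := by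
    refine Finset.sum_congr rfl fun x _ => Finset.sum_congr rfl fun y _ =>
      Finset.sum_congr rfl fun z _ => ?_
    exact hR₄c _ _ _ _ _ _ _ _ rfl (abs_sub_comm _ _) rfl (abs_sub_comm _ _)
  -- assemble
  rw [hNC₁, hNC₂, hNC₃, hNC₄]
  simp only [Finset.sum_add_distrib, Finset.sum_sub_distrib]
  rw [hSA, hSB, hSC, hSD, hSE, T0, T1a, T1b, T1c, T1d, L12, L13, L14, L23, L24, L34,
    L123, L124, L134, L234, L1234]
  ring
end
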